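/- arXiv:1712.00534 — 8 statements merged into one kernel-verified Lean document; each statement's English description precedes it below -/
import Mathlib

section
/- Let (D,d) be a noncomplete rectifiably connected metric space with quasihyperbolic metric k. For any rectifiable curve γ in D with endpoints x and y, the quasihyperbolic length satisfies ℓ_k(γ) ≥ log(1 + ℓ(γ)/min{d(x),d(y)}), where d(z) denotes the distance from z to the boundary ∂D and ℓ(γ) is the arclength of γ. -/
open Set Metric ENNReal

noncomputable section

variable {X : Type*} [MetricSpace X] {Y : Type*} [MetricSpace Y]

/-- Distance from a point `z` to the boundary of `D`, modeled as the distance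
to the complement of `D`. -/
def bdist (D : Set X) (z : X) : ℝ := Metric.infDist z Dᶜ

/-- Distance from a set `A` to the boundary of `D`. -/
def setBdist (D A : Set X) : ℝ := sInf (bdist D '' A)

/-- Quasihyperbolic length (variation) of `f` over the parameter set `s`, the
discretized version of `∫_γ |dz| / dist(z, ∂D)`. -/
def qhVariationOn (D : Set X) (f : ℝ → X) (s : Set ℝ) : ℝ≥0∞ :=
  ⨆ p : ℕ × { u : ℕ → ℝ // Monotone u ∧ ∀ i, u i ∈ s },
    ∑ i ∈ Finset.range p.1,
      edist (f (p.2.1 (i + 1))) (f (p.2.1 i)) /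
        max (ENNReal.ofReal (bdist D (f (p.2.1 i))))
            (ENNReal.ofReal (bdist D (f (p.2.1 (i + 1)))))

/-- `f : [0,1] → D` is a curve in `D` from `x` to `y`. -/
structure IsCurveIn (D : Set X) (f : ℝ → X) (x y : X) : Prop where
  cont : ContinuousOn f (Icc 0 1)
  mem : ∀ t ∈ Icc (0 : ℝ) 1, f t ∈ D
  source : f 0 = x
  target : f 1 = y

/-- Every pair of points of `D` can be joined by a rectifiable curve in `D`. -/
def RectifiablyConnected (D : Set X) : Prop :=
  ∀ x ∈ D, ∀ y ∈ D, ∃ f : ℝ → X, IsCurveIn D f x y ∧ eVariationOn f (Icc 0 1) < ⊤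

/-- The quasihyperbolic distance in `D`. -/
def qhDist (D : Set X) (x y : X) : ℝ≥0∞ :=
  ⨅ (f : ℝ → X) (_ : IsCurveIn D f x y ∧ eVariationOn f (Icc 0 1) < ⊤),
    qhVariationOn D f (Icc 0 1)

/-- Diameter of a set `A ⊆ D` with respect to the quasihyperbolic metric of `D`. -/
def qhDiam (D : Set X) (A : Set X) : ℝ≥0∞ := ⨆ x ∈ A, ⨆ y ∈ A, qhDist D x y

/-- `D` is a length `a`-John space with center `x₀`: every point can be joined to `x₀`
by an `a`-carrot arc, i.e. `ℓ(α[x,z]) ≤ a · dist(z, ∂D)` for every `z` on the arc. -/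
def IsLengthJohn (D : Set X) (a : ℝ) (x₀ : X) : Prop :=
  ∀ x ∈ D, ∃ f : ℝ → X, IsCurveIn D f x x₀ ∧
    ∀ t ∈ Icc (0 : ℝ) 1, eVariationOn f (Icc 0 t) ≤ ENNReal.ofReal (a * bdist D (f t))

/-- `D` is locally `(lam, c)`-quasiconvex: any two points of `B(x, lam·dist(x,∂D))`
can be joined by a `c`-quasiconvex curve in `D`. -/
def LocQuasiconvex (D : Set X) (lam c : ℝ) : Prop :=
  ∀ x ∈ D, ∀ y ∈ D, ∀ z ∈ D,
    dist y x < lam * bdist D x → dist z x < lam * bdist D x →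
      ∃ f : ℝ → X, IsCurveIn D f y z ∧
        eVariationOn f (Icc 0 1) ≤ ENNReal.ofReal (c * dist y z)

/-- `η` is a quasisymmetry control function: an increasing self-homeomorphism of `[0, ∞)`. -/
structure QSControl (η : ℝ → ℝ) : Prop where
  mono : StrictMonoOn η (Ici 0)
  cont : ContinuousOn η (Ici 0)
  zero : η 0 = 0
  surj : ∀ s : ℝ, 0 ≤ s → ∃ t : ℝ, 0 ≤ t ∧ η t = s

/-- `f` is `η`-quasisymmetric on `D`. -/
def IsQSOn (f : X → Y) (D : Set X) (η : ℝ → ℝ) : Prop :=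
  ∀ x ∈ D, ∀ a ∈ D, ∀ b ∈ D, ∀ t : ℝ, 0 ≤ t →
    dist x a ≤ t * dist x b → dist (f x) (f a) ≤ η t * dist (f x) (f b)

/-- `f` is a homeomorphism from `D` onto `D'` with inverse `g`. -/
def IsHomeoOn (f : X → Y) (g : Y → X) (D : Set X) (D' : Set Y) : Prop :=
  ContinuousOn f D ∧ ContinuousOn g D' ∧ MapsTo f D D' ∧ MapsTo g D' D ∧ InvOn g f D D'

end

/-!
The boundary distance is 1-Lipschitz, so at the point reached after arclength `s` along the curve
it is at most `d(x) + s`, and `ℓ_k(γ) ≥ ∫₀^ℓ ds / (d(x) + s) = log (1 + ℓ / d(x))`. Discretely: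
take a partition that almost realises the length and whose steps `e_i` are all at most `m`
(subdivide uniformly and use uniform continuity). With partial sums `S_i`, the `i`-th step
contributes at least `e_i / (d + S_{i+1}) ≥ log ((d + m + S_{i+1}) / (d + m + S_i))`, and these
logarithms telescope; let `m → 0`. Reversing the curve gives the bound with `d(y)`.
-/

open Finset in
theorem Real.log_one_add_sum_div_le {d m : ℝ} {e : ℕ → ℝ} (hd : 0 < d) (he : ∀ i, 0 ≤ e i)
    (hem : ∀ i, e i ≤ m) (n : ℕ) :
    Real.log (1 + (∑ i ∈ range n, e i) / (d + m)) ≤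
      ∑ i ∈ range n, e i / (d + ∑ j ∈ range (i + 1), e j) := by
  induction n with
  | zero => simp
  | succ n ih =>
    set S := ∑ i ∈ range n, e i
    have hS : 0 ≤ S := sum_nonneg fun i _ => he i
    have hen := he n
    have hdm : 0 < d + m := by linarith [hem n]
    have hc : 0 < d + (m + S) := by linarith
    have hsplit : 1 + (S + e n) / (d + m) = (1 + S / (d + m)) * (1 + e n / (d + (m + S))) := by
      field_simp
      ring
    have hstep : Real.log (1 + e n / (d + (m + S))) ≤ e n / (d + ∑ j ∈ range (n + 1), e j) :=
      calc Real.log (1 + e n / (d + (m + S))) ≤ e n / (d + (m + S)) := by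
            linarith [Real.log_le_sub_one_of_pos (by positivity : 0 < 1 + e n / (d + (m + S)))]
        _ ≤ e n / (d + ∑ j ∈ range (n + 1), e j) := by
            rw [sum_range_succ]
            exact div_le_div_of_nonneg_left hen (by linarith) (by linarith [hem n])
    rw [sum_range_succ e, sum_range_succ (fun i => e i / (d + ∑ j ∈ range (i + 1), e j)), hsplit,
      Real.log_mul (by positivity) (by positivity)]
    linarith

open Finset in
theorem sum_range_dist_mul_le {E : Type*} [PseudoMetricSpace E] (g : ℕ → E) (M n : ℕ) :
    ∑ q ∈ range n, dist (g ((q + 1) * M)) (g (q * M)) ≤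
      ∑ k ∈ range (n * M), dist (g (k + 1)) (g k) := by
  induction n with
  | zero => simp
  | succ n ih =>
    rw [sum_range_succ, ← sum_range_add_sum_Ico _ (Nat.mul_le_mul_right M n.le_succ)]
    gcongr
    simpa only [dist_comm] using dist_le_Ico_sum_dist g (Nat.mul_le_mul_right M n.le_succ)

noncomputable def subdivide (u : ℕ → ℝ) (M k : ℕ) : ℝ :=
  u (k / M) + (k % M : ℕ) / M * (u (k / M + 1) - u (k / M))

section subdivide

variable {u : ℕ → ℝ} {M : ℕ}

@[simp]
theorem subdivide_zero : subdivide u M 0 = u 0 := by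
  simp [subdivide]

theorem subdivide_mul (hM : 0 < M) (q : ℕ) : subdivide u M (q * M) = u q := by
  simp [subdivide, Nat.mul_div_cancel _ hM]

theorem subdivide_add_one_sub (hM : 0 < M) (k : ℕ) :
    subdivide u M (k + 1) - subdivide u M k = (u (k / M + 1) - u (k / M)) / M := by
  have hk := Nat.div_add_mod k M
  have hk' := Nat.div_add_mod (k + 1) M
  have hMR : (M : ℝ) ≠ 0 := by positivity
  unfold subdivide
  by_cases hdvd : M ∣ k + 1
  · rw [Nat.succ_div_of_dvd hdvd, Nat.mod_eq_zero_of_dvd hdvd] at hk' ⊢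
    have hmod : ((k % M : ℕ) : ℝ) = M - 1 := by
      rw [eq_sub_iff_add_eq]
      exact_mod_cast (by linarith [Nat.mul_succ M (k / M)] : k % M + 1 = M)
    rw [hmod]
    field_simp
    ring
  · rw [Nat.succ_div_of_not_dvd hdvd] at hk' ⊢
    rw [show (k + 1) % M = k % M + 1 by linarith]
    push_cast
    field_simp
    ring

theorem monotone_subdivide (hu : Monotone u) (hM : 0 < M) : Monotone (subdivide u M) :=
  monotone_nat_of_le_succ fun k => sub_nonneg.1 <| by
    rw [subdivide_add_one_sub hM]
    exact div_nonneg (sub_nonneg.2 (hu (k / M).le_succ)) M.cast_nonneg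

theorem subdivide_mem_Icc (hu : Monotone u) (hM : 0 < M) (k : ℕ) :
    subdivide u M k ∈ Icc (u (k / M)) (u (k / M + 1)) := by
  have hΔ : 0 ≤ u (k / M + 1) - u (k / M) := sub_nonneg.2 (hu (k / M).le_succ)
  have ht : ((k % M : ℕ) : ℝ) / M ≤ 1 :=
    div_le_one_of_le₀ (by exact_mod_cast (Nat.mod_lt k hM).le) M.cast_nonneg
  constructor <;> unfold subdivide <;> nlinarith [show 0 ≤ ((k % M : ℕ) : ℝ) / M by positivity]

end subdivide

open Finset in
theorem eVariationOn.exists_monotone_from_lt_sum_dist {α E : Type*} [LinearOrder α]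
    [PseudoMetricSpace E] {f : α → E} {s : Set α} {a : α} (ha : IsLeast s a) {L : ℝ}
    (hL : L < (eVariationOn f s).toReal) :
    ∃ (n : ℕ) (u : ℕ → α), Monotone u ∧ (∀ i, u i ∈ s) ∧ u 0 = a ∧
      L < ∑ i ∈ range n, dist (f (u (i + 1))) (f (u i)) := by
  rcases lt_or_ge L 0 with hL0 | hL0
  · exact ⟨0, fun _ => a, monotone_const, fun _ => ha.1, rfl, by simpa⟩
  have hV : eVariationOn f s ≠ ⊤ := by
    rintro hV
    rw [hV, toReal_top] at hL
    linarith
  obtain ⟨⟨n, u, hu, hus⟩, hlt⟩ := lt_iSup_iff.1 ((ofReal_lt_iff_lt_toReal hL0 hV).2 hL)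
  obtain ⟨v, m, hv, hvs, ⟨i, -, hvi⟩, hle⟩ := eVariationOn.add_point f ha.1 u hu hus n
  refine ⟨m, v, hv, hvs, le_antisymm (hvi ▸ hv (Nat.zero_le i)) (ha.2 (hvs 0)), ?_⟩
  have hsum := hlt.trans_le hle
  simp only [edist_dist, ← ofReal_sum_of_nonneg fun _ _ => dist_nonneg] at hsum
  exact (ofReal_lt_ofReal_iff'.1 hsum).1

open Finset in
theorem ContinuousOn.exists_fine_partition {E : Type*} [PseudoMetricSpace E] {f : ℝ → E}
    {a b : ℝ} (hab : a ≤ b) (hf : ContinuousOn f (Icc a b)) {δ : ℝ} (hδ : 0 < δ) :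
    ∃ (n : ℕ) (v : ℕ → ℝ), Monotone v ∧ (∀ i, v i ∈ Icc a b) ∧ v 0 = a ∧
      (∀ i, dist (f (v (i + 1))) (f (v i)) ≤ δ) ∧
      (eVariationOn f (Icc a b)).toReal - δ ≤ ∑ i ∈ range n, dist (f (v (i + 1))) (f (v i)) := by
  obtain ⟨n, u, hu, hus, hu0, hsum⟩ :=
    eVariationOn.exists_monotone_from_lt_sum_dist (f := f) (isLeast_Icc hab) (sub_lt_self _ hδ)
  obtain ⟨δ₀, hδ₀, hmod⟩ :=
    Metric.uniformContinuousOn_iff.1 (isCompact_Icc.uniformContinuousOn_of_continuous hf) δ hδ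
  obtain ⟨N, hN⟩ := exists_nat_gt ((b - a) / δ₀)
  set M := N + 1
  have hM : 0 < M := N.succ_pos
  have hmesh : (b - a) / M < δ₀ := by
    rw [div_lt_iff₀ (by positivity)]
    rw [div_lt_iff₀ hδ₀] at hN
    push_cast [M]
    linarith
  set v := subdivide u M
  have hvs (k : ℕ) : v k ∈ Icc a b :=
    Icc_subset_Icc (hus _).1 (hus _).2 (subdivide_mem_Icc hu hM k)
  refine ⟨n * M, v, monotone_subdivide hu hM, hvs, by simp [v, hu0], fun k => ?_, ?_⟩
  · refine (hmod _ (hvs _) _ (hvs k) ?_).le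
    rw [Real.dist_eq, abs_of_nonneg (sub_nonneg.2 (monotone_subdivide hu hM k.le_succ)),
      subdivide_add_one_sub hM]
    refine lt_of_le_of_lt ?_ hmesh
    gcongr
    · exact (hus _).2
    · exact (hus _).1
  · refine hsum.le.trans (le_of_eq_of_le ?_ (sum_range_dist_mul_le (fun k => f (v k)) M n))
    simp only [v, subdivide_mul hM]

theorem sum_le_qhVariationOn {X : Type*} [MetricSpace X] (D : Set X) (f : ℝ → X) {s : Set ℝ}
    {u : ℕ → ℝ} (hu : Monotone u) (hus : ∀ i, u i ∈ s) (n : ℕ) :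
    ∑ i ∈ Finset.range n, edist (f (u (i + 1))) (f (u i)) /
        max (ENNReal.ofReal (bdist D (f (u i)))) (ENNReal.ofReal (bdist D (f (u (i + 1))))) ≤
      qhVariationOn D f s :=
  le_iSup_of_le (⟨n, u, hu, hus⟩ : ℕ × { u : ℕ → ℝ // Monotone u ∧ ∀ i, u i ∈ s }) le_rfl

open Finset in
theorem ofReal_log_le_qhVariationOn_of_dist_le {X : Type*} [MetricSpace X] {D : Set X}
    {f : ℝ → X} {s : Set ℝ} {v : ℕ → ℝ} (hv : Monotone v) (hvs : ∀ i, v i ∈ s) {m : ℝ}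
    (hstep : ∀ i, dist (f (v (i + 1))) (f (v i)) ≤ m) (hd : 0 < bdist D (f (v 0))) (n : ℕ) :
    ENNReal.ofReal (Real.log (1 + (∑ i ∈ range n, dist (f (v (i + 1))) (f (v i))) /
        (bdist D (f (v 0)) + m))) ≤ qhVariationOn D f s := by
  set d := bdist D (f (v 0))
  set e := fun i => dist (f (v (i + 1))) (f (v i))
  have hbdist (j : ℕ) : bdist D (f (v j)) ≤ d + ∑ i ∈ range j, e i := by
    calc bdist D (f (v j)) ≤ d + dist (f (v 0)) (f (v j)) :=
          dist_comm (f (v j)) (f (v 0)) ▸ infDist_le_infDist_add_dist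
      _ ≤ d + ∑ i ∈ range j, e i := by
          gcongr
          simpa only [e, dist_comm, Function.comp_apply] using dist_le_range_sum_dist (f ∘ v) j
  have hterm (i : ℕ) : ENNReal.ofReal (e i / (d + ∑ j ∈ range (i + 1), e j)) ≤
      edist (f (v (i + 1))) (f (v i)) /
        max (ENNReal.ofReal (bdist D (f (v i)))) (ENNReal.ofReal (bdist D (f (v (i + 1))))) := by
    have hpos : 0 < d + ∑ j ∈ range (i + 1), e j :=
      add_pos_of_pos_of_nonneg hd (sum_nonneg fun _ _ => dist_nonneg)
    rw [ENNReal.ofReal_div_of_pos hpos, edist_dist]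
    refine ENNReal.div_le_div_left (max_le (ofReal_le_ofReal ((hbdist i).trans ?_))
      (ofReal_le_ofReal (hbdist (i + 1)))) _
    rw [sum_range_succ]
    linarith [dist_nonneg (x := f (v (i + 1))) (y := f (v i))]
  calc ENNReal.ofReal (Real.log (1 + (∑ i ∈ range n, e i) / (d + m)))
      ≤ ENNReal.ofReal (∑ i ∈ range n, e i / (d + ∑ j ∈ range (i + 1), e j)) :=
        ofReal_le_ofReal (Real.log_one_add_sum_div_le hd (fun _ => dist_nonneg) hstep n)
    _ = ∑ i ∈ range n, ENNReal.ofReal (e i / (d + ∑ j ∈ range (i + 1), e j)) :=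
        ofReal_sum_of_nonneg fun _ _ => by positivity
    _ ≤ _ := (sum_le_sum fun i _ => hterm i).trans (sum_le_qhVariationOn D f hv hvs n)

theorem ofReal_log_le_qhVariationOn {X : Type*} [MetricSpace X] (D : Set X) {f : ℝ → X}
    {a b : ℝ} (hab : a ≤ b) (hf : ContinuousOn f (Icc a b)) :
    ENNReal.ofReal (Real.log (1 + (eVariationOn f (Icc a b)).toReal / bdist D (f a))) ≤
      qhVariationOn D f (Icc a b) := by
  set d := bdist D (f a)
  set V := (eVariationOn f (Icc a b)).toReal
  rcases (show 0 ≤ d from infDist_nonneg).eq_or_lt with hd | hd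
  · -- `x / 0 = 0`, so the left side is `log 1 = 0`
    simp [← hd]
  have hlower (δ : ℝ) (hδ : 0 < δ) :
      ENNReal.ofReal (Real.log (1 + (V - δ) / (d + δ))) ≤ qhVariationOn D f (Icc a b) := by
    obtain ⟨n, v, hv, hvs, hv0, hstep, hsum⟩ := hf.exists_fine_partition hab hδ
    refine le_trans (ofReal_le_ofReal (Real.log_le_log ?_ (by gcongr)))
      (hv0 ▸ ofReal_log_le_qhVariationOn_of_dist_le hv hvs hstep (by rwa [hv0]) n)
    have hdδ : 0 < d + δ := by positivity
    rw [show 1 + (V - δ) / (d + δ) = (d + V) / (d + δ) by field_simp; ring]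
    positivity
  have hlim : Filter.Tendsto (fun δ => ENNReal.ofReal (Real.log (1 + (V - δ) / (d + δ))))
      (nhdsWithin 0 (Ioi 0)) (nhds (ENNReal.ofReal (Real.log (1 + V / d)))) := by
    have hcont : ContinuousAt (fun δ => Real.log (1 + (V - δ) / (d + δ))) 0 := by
      have : 0 < 1 + (V - 0) / (d + 0) := by simp only [sub_zero, add_zero]; positivity
      fun_prop (disch := first | exact this.ne' | simpa using hd.ne')
    simpa using (ENNReal.tendsto_ofReal hcont.tendsto).mono_left nhdsWithin_le_nhds
  exact le_of_tendsto hlim (eventually_nhdsWithin_of_forall hlower)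

theorem ContinuousOn.comp_reflect_Icc {E : Type*} [TopologicalSpace E] {f : ℝ → E} {a b : ℝ}
    (hf : ContinuousOn f (Icc a b)) : ContinuousOn (fun t => f (a + b - t)) (Icc a b) :=
  hf.comp (by fun_prop) fun t ht => ⟨by linarith [ht.2], by linarith [ht.1]⟩

theorem eVariationOn_comp_reflect_Icc {E : Type*} [PseudoEMetricSpace E] (f : ℝ → E) (a b : ℝ) :
    eVariationOn (fun t => f (a + b - t)) (Icc a b) = eVariationOn f (Icc a b) := by
  have hanti : AntitoneOn (fun t : ℝ => a + b - t) (Icc a b) := fun _ _ _ _ h => sub_le_sub_left h _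
  rw [← Function.comp_def, eVariationOn.comp_eq_of_antitoneOn f _ hanti, image_const_sub_Icc]
  simp

theorem qhVariationOn_comp_reflect_Icc_le {X : Type*} [MetricSpace X] (D : Set X) (f : ℝ → X)
    (a b : ℝ) :
    qhVariationOn D (fun t => f (a + b - t)) (Icc a b) ≤ qhVariationOn D f (Icc a b) := by
  refine iSup_le fun ⟨n, u, hu, hus⟩ => ?_
  let w (i : ℕ) : ℝ := a + b - u (n - i)
  have hw : Monotone w := fun i j hij => sub_le_sub_left (hu (Nat.sub_le_sub_left hij n)) _
  have hws (i : ℕ) : w i ∈ Icc a b := ⟨by linarith [(hus (n - i)).2], by linarith [(hus (n - i)).1]⟩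
  refine Eq.trans_le ?_ (sum_le_qhVariationOn D f hw hws n)
  conv_rhs => rw [← Finset.sum_range_reflect]
  refine Finset.sum_congr rfl fun i hi => ?_
  have hi : i < n := Finset.mem_range.1 hi
  simp only [w, show n - (n - 1 - i) = i + 1 by omega, show n - (n - 1 - i + 1) = i by omega,
    edist_comm, max_comm]

theorem quasihyperbolic_length_lower_bound_general
    {X : Type*} [MetricSpace X] (D : Set X) (x y : X) (f : ℝ → X)
    (hf : IsCurveIn D f x y) :
    ENNReal.ofReal (Real.log (1 + (eVariationOn f (Icc 0 1)).toReal /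
        min (bdist D x) (bdist D y))) ≤ qhVariationOn D f (Icc 0 1) := by
  rcases le_total (bdist D x) (bdist D y) with hxy | hyx
  · rw [min_eq_left hxy, ← hf.source]
    exact ofReal_log_le_qhVariationOn D zero_le_one hf.cont
  · have hrev := (ofReal_log_le_qhVariationOn D zero_le_one hf.cont.comp_reflect_Icc).trans
      (qhVariationOn_comp_reflect_Icc_le D f 0 1)
    rwa [eVariationOn_comp_reflect_Icc, zero_add, sub_zero, hf.target, ← min_eq_right hyx] at hrev

/-- For a rectifiable curve `γ` in a noncomplete rectifiably connected
metric space `D` with endpoints `x` and `y`,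
`ℓ_k(γ) ≥ log(1 + ℓ(γ) / min(d(x), d(y)))`. -/
theorem quasihyperbolic_length_lower_bound
    {X : Type*} [MetricSpace X] (D : Set X) (hDo : IsOpen D) (hbd : Dᶜ.Nonempty)
    (hrc : RectifiablyConnected D) (x y : X) (f : ℝ → X)
    (hf : IsCurveIn D f x y) (hrect : eVariationOn f (Icc 0 1) < ⊤) :
    ENNReal.ofReal (Real.log (1 + (eVariationOn f (Icc 0 1)).toReal /
        min (bdist D x) (bdist D y))) ≤ qhVariationOn D f (Icc 0 1) :=
  quasihyperbolic_length_lower_bound_general D x y f hf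
end

section
/- Let (D,d) be a noncomplete rectifiably connected metric space, let x₁ ∈ D, and let α be a rectifiable arc with one endpoint x₁ such that ℓ(α[x₁,y]) ≤ a·d(y) for all y ∈ α (an a-carrot arc) and such that α is contained in the closed ball B̄(x₁, d(x₁)/2). Then for every y ∈ α, the quasihyperbolic length satisfies ℓ_k(α[x₁,y]) ≤ 3a. -/
open Set Metric ENNReal

/-!
Along the arc the boundary distance stays between `d(x₁)/2` and `3 d(x₁)/2`. Bounding every
denominator of the quasihyperbolic length from below by `d(x₁)/2` gives
`ℓ_k(α[x₁,y]) ≤ ℓ(α[x₁,y]) / (d(x₁)/2) ≤ a d(y) / (d(x₁)/2) ≤ 3a`.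
-/

section

variable {X : Type*} [MetricSpace X]

lemma bdist_mem_Icc_of_dist_le_half {D : Set X} {x y : X} (h : dist y x ≤ bdist D x / 2) :
    bdist D y ∈ Icc (bdist D x / 2) (3 / 2 * bdist D x) := by
  have hxy : bdist D x ≤ bdist D y + dist x y := infDist_le_infDist_add_dist
  have hyx : bdist D y ≤ bdist D x + dist y x := infDist_le_infDist_add_dist
  rw [dist_comm] at hxy
  constructor <;> linarith

lemma qhVariationOn_le_eVariationOn_div {D : Set X} {f : ℝ → X} {s : Set ℝ} {δ : ℝ}
    (hδ : ∀ t ∈ s, δ ≤ bdist D (f t)) :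
    qhVariationOn D f s ≤ eVariationOn f s / ENNReal.ofReal δ := by
  refine iSup_le fun ⟨n, u, hu, hus⟩ => ?_
  calc ∑ i ∈ Finset.range n, edist (f (u (i + 1))) (f (u i)) /
          max (ENNReal.ofReal (bdist D (f (u i)))) (ENNReal.ofReal (bdist D (f (u (i + 1)))))
      ≤ ∑ i ∈ Finset.range n, edist (f (u (i + 1))) (f (u i)) / ENNReal.ofReal δ :=
        Finset.sum_le_sum fun i _ =>
          ENNReal.div_le_div_left (le_max_of_le_left (ofReal_le_ofReal (hδ _ (hus i)))) _
    _ = (∑ i ∈ Finset.range n, edist (f (u (i + 1))) (f (u i))) / ENNReal.ofReal δ := by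
        simp only [div_eq_mul_inv, Finset.sum_mul]
    _ ≤ eVariationOn f s / ENNReal.ofReal δ := by gcongr; exact eVariationOn.sum_le hu hus

end

theorem qhLength_le_of_carrot_in_ball_general
    {X : Type*} [MetricSpace X] (D : Set X) (a : ℝ) (ha : 1 ≤ a)
    (x₁ : X) (f : ℝ → X)
    (hcarrot : ∀ t ∈ Icc (0 : ℝ) 1,
      eVariationOn f (Icc 0 t) ≤ ENNReal.ofReal (a * bdist D (f t)))
    (hball : ∀ t ∈ Icc (0 : ℝ) 1, dist (f t) x₁ ≤ bdist D x₁ / 2) :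
    ∀ t ∈ Icc (0 : ℝ) 1, qhVariationOn D f (Icc 0 t) ≤ ENNReal.ofReal (3 * a) := by
  intro t ht
  have hbdist s hs := bdist_mem_Icc_of_dist_le_half (hball s hs)
  have hδ : ∀ s ∈ Icc 0 t, bdist D x₁ / 2 ≤ bdist D (f s) := fun s hs =>
    (hbdist s (Icc_subset_Icc le_rfl ht.2 hs)).1
  have hup : a * bdist D (f t) ≤ 3 * a * (bdist D x₁ / 2) := by nlinarith [(hbdist t ht).2]
  calc qhVariationOn D f (Icc 0 t)
      ≤ eVariationOn f (Icc 0 t) / ENNReal.ofReal (bdist D x₁ / 2) :=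
        qhVariationOn_le_eVariationOn_div hδ
    _ ≤ ENNReal.ofReal (a * bdist D (f t)) / ENNReal.ofReal (bdist D x₁ / 2) :=
        ENNReal.div_le_div_right (hcarrot t ht) _
    _ ≤ ENNReal.ofReal (3 * a) * ENNReal.ofReal (bdist D x₁ / 2) /
          ENNReal.ofReal (bdist D x₁ / 2) := by
        rw [← ofReal_mul (by linarith)]
        exact ENNReal.div_le_div_right (ofReal_le_ofReal hup) _
    _ ≤ ENNReal.ofReal (3 * a) := div_le_of_le_mul le_rfl

/-- If `α` is an `a`-carrot arc starting from `x₁` contained in the closed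
ball `B̄(x₁, d(x₁)/2)`, then `ℓ_k(α[x₁,y]) ≤ 3a` for every `y ∈ α`. -/
theorem qhLength_le_of_carrot_in_ball
    {X : Type*} [MetricSpace X] (D : Set X) (hDo : IsOpen D) (hbd : Dᶜ.Nonempty)
    (hrc : RectifiablyConnected D) (a : ℝ) (ha : 1 ≤ a)
    (x₁ : X) (hx₁ : x₁ ∈ D) (f : ℝ → X)
    (hcont : ContinuousOn f (Icc 0 1)) (hmem : ∀ t ∈ Icc (0 : ℝ) 1, f t ∈ D)
    (h0 : f 0 = x₁)
    (hcarrot : ∀ t ∈ Icc (0 : ℝ) 1,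
      eVariationOn f (Icc 0 t) ≤ ENNReal.ofReal (a * bdist D (f t)))
    (hball : ∀ t ∈ Icc (0 : ℝ) 1, dist (f t) x₁ ≤ bdist D x₁ / 2) :
    ∀ t ∈ Icc (0 : ℝ) 1, qhVariationOn D f (Icc 0 t) ≤ ENNReal.ofReal (3 * a) :=
  qhLength_le_of_carrot_in_ball_general D a ha x₁ f hcarrot hball
end

section
/- Let (D,d) be a noncomplete rectifiably connected metric space that is length a-John with center x₀. Then for every x₁ ∈ D there is a rectifiable curve α joining x₁ to x₀ such that for all y ∈ α, ℓ_k(α[x₁,y]) ≤ b₁·|log(d(y)/d(x₁))| + b₂, where b₁ = a and b₂ = (3 + log(2a))·a. -/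
open Set Metric ENNReal

/-!
Along an `a`-carrot curve `f` from `x₁`, write `s(u)` for the length of `f` on `[0, u]`.
The boundary distance at `f u` is at least `d(x₁) - s(u)` (it is `1`-Lipschitz) and at least
`s(u) / a` (the carrot condition), so the quasihyperbolic length of `f` on `[0, t]` is at most
`∫₀^{s(t)} ds / max (d(x₁) - s) (s / a)`. Discretely: each term of a partition sum is dominated
by an increment of this integral, so partition sums telescope. The integral has a closed form,
which `s(t) ≤ a · d(f t)` bounds by `(a + 1) log (a + 1) + a |log (d(f t) / d(x₁))|`.
-/

/-- The two branches of `max (d - s) (s / a)` cross at `s = johnCrossover d a`. -/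
noncomputable def johnCrossover (d a : ℝ) : ℝ := a * d / (a + 1)

/-- `johnGauge d a s = ∫₀ˢ dv / max (d - v) (v / a)` for `0 ≤ s`. -/
noncomputable def johnGauge (d a s : ℝ) : ℝ :=
  Real.log (d / (d - min s (johnCrossover d a))) +
    a * Real.log (max s (johnCrossover d a) / johnCrossover d a)

theorem sub_le_mul_log_div {x y : ℝ} (hx : 0 < x) (hy : 0 < y) :
    y - x ≤ y * Real.log (y / x) := by
  have h := mul_le_mul_of_nonneg_left (Real.one_sub_inv_le_log_of_pos (div_pos hy hx)) hy.le
  rwa [inv_div, mul_sub, mul_one, mul_div_cancel₀ _ hy.ne'] at h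

section JohnGauge

variable {d a : ℝ}

theorem johnCrossover_pos (ha : 0 < a) (hd : 0 < d) : 0 < johnCrossover d a := by
  unfold johnCrossover; positivity

theorem sub_johnCrossover (ha : 0 < a) : d - johnCrossover d a = d / (a + 1) := by
  unfold johnCrossover; field_simp; ring

theorem johnCrossover_lt (ha : 0 < a) (hd : 0 < d) : johnCrossover d a < d := by
  have : 0 < d / (a + 1) := by positivity
  linarith [sub_johnCrossover (d := d) ha]

namespace johnGauge

theorem monotone (ha : 0 < a) (hd : 0 < d) : Monotone (johnGauge d a) := by
  intro p q hpq
  have hc := johnCrossover_pos ha hd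
  have hsub : ∀ s, 0 < d - min s (johnCrossover d a) := fun s =>
    sub_pos.2 ((min_le_right _ _).trans_lt (johnCrossover_lt ha hd))
  have hdp := hsub p
  have hdq := hsub q
  unfold johnGauge
  gcongr

theorem zero (ha : 0 < a) (hd : 0 < d) : johnGauge d a 0 = 0 := by
  have hc := johnCrossover_pos ha hd
  simp [johnGauge, min_eq_left hc.le, max_eq_right hc.le, hd.ne', hc.ne']

theorem sub_le_mul_of_le_crossover (ha : 0 < a) (hd : 0 < d) {p q : ℝ} (hpq : p ≤ q)
    (hq : q ≤ johnCrossover d a) :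
    q - p ≤ (johnGauge d a q - johnGauge d a p) * (d - p) := by
  have hdq : 0 < d - q := sub_pos.2 (hq.trans_lt (johnCrossover_lt ha hd))
  have hdp : 0 < d - p := by linarith
  have hdiff : johnGauge d a q - johnGauge d a p = Real.log ((d - p) / (d - q)) := by
    simp only [johnGauge, min_eq_left hq, min_eq_left (hpq.trans hq), max_eq_right hq,
      max_eq_right (hpq.trans hq)]
    rw [Real.log_div hd.ne' hdq.ne', Real.log_div hd.ne' hdp.ne', Real.log_div hdp.ne' hdq.ne']
    ring
  rw [hdiff, mul_comm]
  linarith [sub_le_mul_log_div hdq hdp]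

theorem sub_le_mul_of_crossover_le (ha : 0 < a) (hd : 0 < d) {p q : ℝ} (hpq : p ≤ q)
    (hp : johnCrossover d a ≤ p) :
    q - p ≤ (johnGauge d a q - johnGauge d a p) * (q / a) := by
  have hc := johnCrossover_pos ha hd
  have hp0 : 0 < p := hc.trans_le hp
  have hq0 : 0 < q := hp0.trans_le hpq
  have hdiff : johnGauge d a q - johnGauge d a p = a * Real.log (q / p) := by
    simp only [johnGauge, min_eq_right hp, min_eq_right (hp.trans hpq), max_eq_left hp,
      max_eq_left (hp.trans hpq)]
    rw [Real.log_div hq0.ne' hc.ne', Real.log_div hp0.ne' hc.ne', Real.log_div hq0.ne' hp0.ne']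
    ring
  rw [hdiff, show a * Real.log (q / p) * (q / a) = q * Real.log (q / p) by field_simp]
  exact sub_le_mul_log_div hp0 hq0

theorem sub_le_mul_max (ha : 0 < a) (hd : 0 < d) {p q : ℝ} (hpq : p ≤ q) :
    q - p ≤ (johnGauge d a q - johnGauge d a p) * max (d - p) (q / a) := by
  set c := johnCrossover d a
  have hmono := monotone ha hd
  rcases le_total q c with hqc | hcq
  · calc q - p ≤ (johnGauge d a q - johnGauge d a p) * (d - p) :=
          sub_le_mul_of_le_crossover ha hd hpq hqc
      _ ≤ _ := by gcongr; exacts [sub_nonneg.2 (hmono hpq), le_max_left _ _]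
  rcases le_total c p with hcp | hpc
  · calc q - p ≤ (johnGauge d a q - johnGauge d a p) * (q / a) :=
          sub_le_mul_of_crossover_le ha hd hpq hcp
      _ ≤ _ := by gcongr; exacts [sub_nonneg.2 (hmono hpq), le_max_right _ _]
  calc q - p = (c - p) + (q - c) := by ring
    _ ≤ (johnGauge d a c - johnGauge d a p) * (d - p)
          + (johnGauge d a q - johnGauge d a c) * (q / a) :=
        add_le_add (sub_le_mul_of_le_crossover ha hd hpc le_rfl)
          (sub_le_mul_of_crossover_le ha hd hcq le_rfl)
    _ ≤ (johnGauge d a c - johnGauge d a p) * max (d - p) (q / a)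
          + (johnGauge d a q - johnGauge d a c) * max (d - p) (q / a) := by
        gcongr
        exacts [sub_nonneg.2 (hmono hpc), le_max_left _ _, sub_nonneg.2 (hmono hcq),
          le_max_right _ _]
    _ = _ := by ring

theorem div_max_le_ofReal_sub (ha : 0 < a) (hd : 0 < d) {e : ℝ≥0∞} {p q r s : ℝ}
    (hpq : p ≤ q) (he : e ≤ ENNReal.ofReal (q - p)) (hr : d - p ≤ r) (hs : q / a ≤ s) :
    e / max (ENNReal.ofReal r) (ENNReal.ofReal s) ≤
      ENNReal.ofReal (johnGauge d a q - johnGauge d a p) := by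
  have hM : 0 < max (d - p) (q / a) := by
    rcases lt_or_ge p d with hpd | hdp
    · exact lt_max_of_lt_left (sub_pos.2 hpd)
    · exact lt_max_of_lt_right (div_pos (hd.trans_le (hdp.trans hpq)) ha)
  calc e / max (ENNReal.ofReal r) (ENNReal.ofReal s)
      ≤ ENNReal.ofReal (q - p) / ENNReal.ofReal (max (d - p) (q / a)) := by
        rw [ofReal_max]; gcongr
    _ = ENNReal.ofReal ((q - p) / max (d - p) (q / a)) := (ofReal_div_of_pos hM).symm
    _ ≤ _ := ofReal_le_ofReal ((div_le_iff₀ hM).2 (sub_le_mul_max ha hd hpq))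

theorem le_of_le_mul {T dt : ℝ} (ha : 0 < a) (hd : 0 < d) (hdt : 0 < dt)
    (hT : T ≤ a * dt) :
    johnGauge d a T ≤ (a + 1) * Real.log (a + 1) + a * |Real.log (dt / d)| := by
  set c := johnCrossover d a
  have hc := johnCrossover_pos ha hd
  have hfirst : Real.log (d / (d - min T c)) ≤ Real.log (a + 1) := by
    have hdc : d / (a + 1) ≤ d - min T c := by
      rw [← sub_johnCrossover ha]; linarith [min_le_right T c]
    have hpos : 0 < d - min T c := (by positivity : 0 < d / (a + 1)).trans_le hdc
    refine Real.log_le_log (div_pos hd hpos) ((div_le_iff₀ hpos).2 ?_)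
    calc d = (a + 1) * (d / (a + 1)) := by field_simp
      _ ≤ (a + 1) * (d - min T c) := by gcongr
  have hsecond : Real.log (max T c / c) ≤ Real.log (a + 1) + |Real.log (dt / d)| := by
    have hlog : 0 ≤ Real.log (a + 1) := Real.log_nonneg (by linarith)
    rcases le_total T c with hTc | hcT
    · rw [max_eq_right hTc, div_self hc.ne', Real.log_one]
      positivity
    · have hratio : a * dt / c = (a + 1) * (dt / d) := by
        unfold c johnCrossover; field_simp
      calc Real.log (max T c / c) ≤ Real.log (a * dt / c) := by
            rw [max_eq_left hcT]
            exact Real.log_le_log (div_pos (hc.trans_le hcT) hc) (by gcongr)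
        _ = Real.log (a + 1) + Real.log (dt / d) := by
            rw [hratio, Real.log_mul (by linarith) (by positivity)]
        _ ≤ _ := by gcongr; exact le_abs_self _
  unfold johnGauge
  linarith [mul_le_mul_of_nonneg_left hsecond ha.le]

end johnGauge

end JohnGauge

theorem add_one_mul_log_add_one_le {a : ℝ} (ha : 1 ≤ a) :
    (a + 1) * Real.log (a + 1) ≤ (3 + Real.log (2 * a)) * a := by
  have h₁ : Real.log (a + 1) ≤ a := by
    linarith [Real.log_le_sub_one_of_pos (x := a + 1) (by linarith)]
  have h₂ : Real.log (a + 1) ≤ Real.log (2 * a) := Real.log_le_log (by linarith) (by linarith)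
  linarith [mul_le_mul_of_nonneg_left h₂ (by linarith : (0 : ℝ) ≤ a)]

theorem bdist_pos {X : Type*} [MetricSpace X] {D : Set X} (hD : IsOpen D) (hDc : Dᶜ.Nonempty)
    {z : X} (hz : z ∈ D) : 0 < bdist D z :=
  (hD.isClosed_compl.notMem_iff_infDist_pos hDc).1 (notMem_compl_iff.2 hz)

theorem edist_le_ofReal_variationOnFromTo_sub {α E : Type*} [LinearOrder α]
    [PseudoEMetricSpace E] {f : α → E} {s : Set α} (hf : LocallyBoundedVariationOn f s)
    {a b c : α} (ha : a ∈ s) (hb : b ∈ s) (hc : c ∈ s) (hbc : b ≤ c) :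
    edist (f b) (f c) ≤
      ENNReal.ofReal (variationOnFromTo f s a c - variationOnFromTo f s a b) := by
  rw [variationOnFromTo.sub_right hf ha hc hb, variationOnFromTo.eq_of_le f s hbc,
    ofReal_toReal (hf b c hb hc)]
  exact eVariationOn.edist_le f ⟨hb, le_rfl, hbc⟩ ⟨hc, hbc, le_rfl⟩

section Curve

variable {X : Type*} [MetricSpace X] {D : Set X} {f : ℝ → X}

theorem qhVariationOn_Icc_le_of_step_le {g : ℝ → ℝ} {x y : ℝ} (hg : MonotoneOn g (Icc x y))
    (hstep : ∀ u ∈ Icc x y, ∀ v ∈ Icc x y, u ≤ v →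
      edist (f v) (f u) / max (ENNReal.ofReal (bdist D (f u))) (ENNReal.ofReal (bdist D (f v)))
        ≤ ENNReal.ofReal (g v - g u)) :
    qhVariationOn D f (Icc x y) ≤ ENNReal.ofReal (g y - g x) := by
  refine iSup_le fun ⟨n, u, hu, hus⟩ => ?_
  have hxy : x ≤ y := (hus 0).1.trans (hus 0).2
  have hinc : ∀ i, 0 ≤ g (u (i + 1)) - g (u i) := fun i =>
    sub_nonneg.2 (hg (hus i) (hus (i + 1)) (hu i.le_succ))
  calc _ ≤ ∑ i ∈ Finset.range n, ENNReal.ofReal (g (u (i + 1)) - g (u i)) :=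
        Finset.sum_le_sum fun i _ => hstep _ (hus i) _ (hus (i + 1)) (hu i.le_succ)
    _ = ENNReal.ofReal (g (u n) - g (u 0)) := by
        rw [← ofReal_sum_of_nonneg fun i _ => hinc i, Finset.sum_range_sub (fun i => g (u i))]
    _ ≤ ENNReal.ofReal (g y - g x) := by
        gcongr
        exacts [hg (hus n) ⟨hxy, le_rfl⟩ (hus n).2, hg ⟨le_rfl, hxy⟩ (hus 0) (hus 0).1]

theorem qhVariationOn_Icc_le_johnGauge {a t : ℝ} (ha : 0 < a) (hd : 0 < bdist D (f 0))
    (hcarrot : ∀ u ∈ Icc (0 : ℝ) 1,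
      eVariationOn f (Icc 0 u) ≤ ENNReal.ofReal (a * bdist D (f u)))
    (ht : t ∈ Icc (0 : ℝ) 1) :
    qhVariationOn D f (Icc 0 t) ≤
      ENNReal.ofReal (johnGauge (bdist D (f 0)) a (eVariationOn f (Icc 0 t)).toReal) := by
  set d := bdist D (f 0)
  have h0 : (0 : ℝ) ∈ Icc (0 : ℝ) 1 := ⟨le_rfl, zero_le_one⟩
  have hBV : LocallyBoundedVariationOn f (Icc 0 1) :=
    BoundedVariationOn.locallyBoundedVariationOn
      ((hcarrot 1 ⟨zero_le_one, le_rfl⟩).trans_lt ofReal_lt_top).ne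
  set V := variationOnFromTo f (Icc 0 1) 0
  have hV : ∀ u ∈ Icc (0 : ℝ) 1, V u = (eVariationOn f (Icc 0 u)).toReal := fun u hu => by
    rw [show V u = _ from variationOnFromTo.eq_of_le f _ hu.1, Icc_inter_Icc, max_self,
      min_eq_right hu.2]
  have hV_mono : MonotoneOn V (Icc 0 1) := variationOnFromTo.monotoneOn hBV h0
  have hV_carrot : ∀ u ∈ Icc (0 : ℝ) 1, V u / a ≤ bdist D (f u) := fun u hu => by
    rw [hV u hu, div_le_iff₀' ha]
    exact toReal_le_of_le_ofReal (mul_nonneg ha.le infDist_nonneg) (hcarrot u hu)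
  have hV_lipschitz : ∀ u ∈ Icc (0 : ℝ) 1, d - V u ≤ bdist D (f u) := fun u hu => by
    have hdist : dist (f 0) (f u) ≤ V u := by
      have h := edist_le_ofReal_variationOnFromTo_sub hBV h0 h0 hu hu.1
      rwa [variationOnFromTo.self, sub_zero,
        edist_le_ofReal (variationOnFromTo.nonneg_of_le _ _ hu.1)] at h
    have hinfDist : d ≤ bdist D (f u) + dist (f 0) (f u) := infDist_le_infDist_add_dist
    linarith
  have hsub : Icc 0 t ⊆ Icc (0 : ℝ) 1 := Icc_subset_Icc_right ht.2
  calc qhVariationOn D f (Icc 0 t)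
      ≤ ENNReal.ofReal (johnGauge d a (V t) - johnGauge d a (V 0)) := by
        refine qhVariationOn_Icc_le_of_step_le
          ((johnGauge.monotone ha hd).comp_monotoneOn (hV_mono.mono hsub)) ?_
        intro u hu v hv huv
        rw [edist_comm]
        exact johnGauge.div_max_le_ofReal_sub ha hd (hV_mono (hsub hu) (hsub hv) huv)
          (edist_le_ofReal_variationOnFromTo_sub hBV h0 (hsub hu) (hsub hv) huv)
          (hV_lipschitz u (hsub hu)) (hV_carrot v (hsub hv))
    _ = _ := by
        rw [show V 0 = 0 from variationOnFromTo.self f _ 0, johnGauge.zero ha hd, sub_zero,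
          hV t ht]

end Curve

theorem exists_curve_qhLength_log_bound_of_isLengthJohn_general
    {X : Type*} [MetricSpace X] (D : Set X) (hDo : IsOpen D) (hbd : Dᶜ.Nonempty)
    (a : ℝ) (ha : 1 ≤ a) (x₀ : X)
    (hJ : IsLengthJohn D a x₀) :
    ∀ x₁ ∈ D, ∃ f : ℝ → X, IsCurveIn D f x₁ x₀ ∧
      ∀ t ∈ Icc (0 : ℝ) 1, qhVariationOn D f (Icc 0 t) ≤
        ENNReal.ofReal (a * |Real.log (bdist D (f t) / bdist D x₁)| +
          (3 + Real.log (2 * a)) * a) := by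
  intro x₁ hx₁
  obtain ⟨f, hf, hcarrot⟩ := hJ x₁ hx₁
  refine ⟨f, hf, fun t ht => ?_⟩
  have ha₀ : 0 < a := by linarith
  have hd₁ : 0 < bdist D x₁ := bdist_pos hDo hbd hx₁
  have hdt : 0 < bdist D (f t) := bdist_pos hDo hbd (hf.mem t ht)
  have hlen : (eVariationOn f (Icc 0 t)).toReal ≤ a * bdist D (f t) :=
    toReal_le_of_le_ofReal (by positivity) (hcarrot t ht)
  have hqh := qhVariationOn_Icc_le_johnGauge (D := D) ha₀ (hf.source ▸ hd₁) hcarrot ht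
  rw [hf.source] at hqh
  refine hqh.trans (ofReal_le_ofReal ?_)
  linarith [johnGauge.le_of_le_mul ha₀ hd₁ hdt hlen, add_one_mul_log_add_one_le ha]

/-- If `D` is length `a`-John with center `x₀`, then every `x₁ ∈ D` can be
joined to `x₀` by a curve `α` with `ℓ_k(α[x₁,y]) ≤ a·|log(d(y)/d(x₁))| + (3 + log 2a)·a`
for every `y ∈ α`. -/
theorem exists_curve_qhLength_log_bound_of_isLengthJohn
    {X : Type*} [MetricSpace X] (D : Set X) (hDo : IsOpen D) (hbd : Dᶜ.Nonempty)
    (hrc : RectifiablyConnected D) (a : ℝ) (ha : 1 ≤ a) (x₀ : X) (hx₀ : x₀ ∈ D)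
    (hJ : IsLengthJohn D a x₀) :
    ∀ x₁ ∈ D, ∃ f : ℝ → X, IsCurveIn D f x₁ x₀ ∧
      ∀ t ∈ Icc (0 : ℝ) 1, qhVariationOn D f (Icc 0 t) ≤
        ENNReal.ofReal (a * |Real.log (bdist D (f t) / bdist D x₁)| +
          (3 + Real.log (2 * a)) * a) :=
  exists_curve_qhLength_log_bound_of_isLengthJohn_general D hDo hbd a ha x₀ hJ
end

section
/- Let (D,d) be a noncomplete rectifiably connected metric space, x₀ ∈ D with diam(D) ≤ b·d(x₀), and suppose for every x₁ ∈ D there is a curve α from x₁ to x₀ with ℓ_k(α[x₁,y]) ≤ b₁|log(d(y)/d(x₁))| + b₂ for all y ∈ α. Then for every x₁ ∈ D there is a curve α from x₁ to x₀ such that ℓ_k(α[x₁,y]) ≤ b₁ log(2b) + b₂, where y = x₀ if d(x₁) ≥ d(x₀)/2, and otherwise y is the first point of α with d(y) = 2d(x₁). -/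
open Set Metric ENNReal

/-- If `diam D ≤ b·d(x₀)` and every `x₁` joins `x₀` by a curve with the
logarithmic quasihyperbolic bound, then every `x₁` joins `x₀` by a curve `α` with
`ℓ_k(α[x₁,y]) ≤ b₁ log(2b) + b₂`, where `y = x₀` if `d(x₁) ≥ d(x₀)/2` and otherwise
`y` is the first point of `α` with `d(y) = 2 d(x₁)`. -/
theorem exists_curve_qhLength_le_of_log_bound
    {X : Type*} [MetricSpace X] (D : Set X) (hDo : IsOpen D) (hbd : Dᶜ.Nonempty)
    (hrc : RectifiablyConnected D) (b b₁ b₂ : ℝ) (hb : 1 < b) (hb₁ : 0 < b₁)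
    (hb₂ : 0 < b₂) (x₀ : X) (hx₀ : x₀ ∈ D)
    (hdiam : EMetric.diam D ≤ ENNReal.ofReal (b * bdist D x₀))
    (hlog : ∀ x₁ ∈ D, ∃ f : ℝ → X, IsCurveIn D f x₁ x₀ ∧
      ∀ t ∈ Icc (0 : ℝ) 1, qhVariationOn D f (Icc 0 t) ≤
        ENNReal.ofReal (b₁ * |Real.log (bdist D (f t) / bdist D x₁)| + b₂)) :
    ∀ x₁ ∈ D, ∃ f : ℝ → X, IsCurveIn D f x₁ x₀ ∧
      ((bdist D x₀ / 2 ≤ bdist D x₁ →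
          qhVariationOn D f (Icc 0 1) ≤ ENNReal.ofReal (b₁ * Real.log (2 * b) + b₂)) ∧
       (bdist D x₁ < bdist D x₀ / 2 → ∃ s ∈ Icc (0 : ℝ) 1,
          bdist D (f s) = 2 * bdist D x₁ ∧
          (∀ u ∈ Ico (0 : ℝ) s, bdist D (f u) ≠ 2 * bdist D x₁) ∧
          qhVariationOn D f (Icc 0 s) ≤ ENNReal.ofReal (b₁ * Real.log (2 * b) + b₂))) := by

  intro x₁ hx₁
  obtain ⟨f, hf, hbound⟩ := hlog x₁ hx₁
  have hpos : ∀ z ∈ D, 0 < bdist D z := fun z hz =>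
    (hDo.isClosed_compl.notMem_iff_infDist_pos hbd).1 (by simpa using hz)
  have hx₀pos : 0 < bdist D x₀ := hpos x₀ hx₀
  have hx₁pos : 0 < bdist D x₁ := hpos x₁ hx₁
  have h2b : (2:ℝ) ≤ 2 * b := by linarith
  have hlog2b : Real.log 2 ≤ Real.log (2 * b) := Real.log_le_log (by norm_num) h2b
  have hlog2bpos : 0 ≤ Real.log (2 * b) :=
    Real.log_nonneg (by linarith)
  refine ⟨f, hf, ?_, ?_⟩
  · intro hge
    have h1 := hbound 1 ⟨zero_le_one, le_refl 1⟩
    rw [hf.target] at h1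
    refine h1.trans (ENNReal.ofReal_le_ofReal ?_)
    have hd : dist x₁ x₀ ≤ b * bdist D x₀ := by
      have h := EMetric.edist_le_diam_of_mem (hf.mem 0 ⟨le_refl 0, zero_le_one⟩)
        (hf.mem 1 ⟨zero_le_one, le_refl 1⟩)
      rw [hf.source, hf.target] at h
      have h2 := h.trans hdiam
      rw [edist_dist] at h2
      exact (ENNReal.ofReal_le_ofReal_iff (by positivity)).1 h2
    have htri : bdist D x₁ ≤ bdist D x₀ + dist x₁ x₀ :=
      Metric.infDist_le_infDist_add_dist
    have hup : bdist D x₀ / bdist D x₁ ≤ 2 * b := by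
      rw [div_le_iff₀ hx₁pos]; nlinarith
    have hdown : bdist D x₁ / bdist D x₀ ≤ 2 * b := by
      rw [div_le_iff₀ hx₀pos]; nlinarith
    have habs : |Real.log (bdist D x₀ / bdist D x₁)| ≤ Real.log (2 * b) := by
      rw [abs_le]
      constructor
      · have := Real.log_le_log (div_pos hx₁pos hx₀pos) hdown
        rw [Real.log_div hx₁pos.ne' hx₀pos.ne'] at this
        rw [Real.log_div hx₀pos.ne' hx₁pos.ne']
        linarith
      · exact Real.log_le_log (div_pos hx₀pos hx₁pos) hup
    nlinarith
  · intro hlt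
    set g : ℝ → ℝ := fun t => bdist D (f t) with hg_def
    have hg : ContinuousOn g (Icc 0 1) :=
      (Metric.continuous_infDist_pt Dᶜ).comp_continuousOn hf.cont
    have hg0 : g 0 = bdist D x₁ := by rw [hg_def]; simp [hf.source]
    have hg1 : g 1 = bdist D x₀ := by rw [hg_def]; simp [hf.target]
    have hmem : (2 * bdist D x₁) ∈ Icc (g 0) (g 1) := by
      rw [hg0, hg1]; constructor <;> [linarith; linarith]
    obtain ⟨t₀, ht₀, hgt₀⟩ := intermediate_value_Icc zero_le_one hg hmem
    set S : Set ℝ := Icc 0 1 ∩ g ⁻¹' {2 * bdist D x₁} with hS_def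
    have hSclosed : IsClosed S :=
      hg.preimage_isClosed_of_isClosed isClosed_Icc isClosed_singleton
    have hSne : S.Nonempty := ⟨t₀, ht₀, hgt₀⟩
    have hSbdd : BddBelow S := ⟨0, fun t ht => ht.1.1⟩
    have hs₀ : sInf S ∈ S := hSclosed.csInf_mem hSne hSbdd
    refine ⟨sInf S, hs₀.1, hs₀.2, ?_, ?_⟩
    · intro u hu hgu
      have : sInf S ≤ u := csInf_le hSbdd ⟨⟨hu.1, hu.2.le.trans hs₀.1.2⟩, hgu⟩
      exact absurd this (not_le.2 hu.2)
    · have h1 := hbound (sInf S) hs₀.1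
      have hval : bdist D (f (sInf S)) = 2 * bdist D x₁ := hs₀.2
      rw [hval] at h1
      refine h1.trans (ENNReal.ofReal_le_ofReal ?_)
      have : (2 * bdist D x₁) / bdist D x₁ = 2 := by field_simp
      rw [this]
      have habs : |Real.log 2| = Real.log 2 :=
        abs_of_nonneg (Real.log_nonneg (by norm_num))
      rw [habs]
      nlinarith
end

section
/- Let (D,d) be a locally (λ,c)-quasiconvex, rectifiably connected, noncomplete metric space and x₀ ∈ D. If for every x₁ ∈ D one can join x₁ to x₀ by a curve β with ℓ(β) ≤ a|x₁ − x₀| and ℓ(β[x₁,z]) ≤ a·d(z) for all z ∈ β, then D is length a-John with center x₀. Conversely, if D is length a-John with center x₀, then there exists a' depending only on a, λ, c such that every x₁ ∈ D can be joined to x₀ by a curve β with ℓ(β) ≤ a'|x₁ − x₀| that is an a'-carrot arc. -/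
open Set Metric ENNReal

/-- In a locally `(λ,c)`-quasiconvex space: if every `x₁` joins the center
`x₀` by an `a`-carrot arc `β` with `ℓ(β) ≤ a|x₁ − x₀|` then `D` is length `a`-John;
conversely, if `D` is length `a`-John with center `x₀` then there is `a'` depending
only on `a, λ, c` such that every `x₁` joins `x₀` by an `a'`-carrot arc `β` with
`ℓ(β) ≤ a'|x₁ − x₀|`. -/
theorem isLengthJohn_iff_quasiconvex_carrot (a lam c : ℝ) (ha : 1 ≤ a)
    (hlam0 : 0 < lam) (hlam : lam ≤ 1 / 2) (hc : 1 ≤ c) :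
    (∀ (X : Type) [MetricSpace X], ∀ D : Set X, IsOpen D → Dᶜ.Nonempty →
      RectifiablyConnected D → LocQuasiconvex D lam c → ∀ x₀ ∈ D,
      (∀ x₁ ∈ D, ∃ f : ℝ → X, IsCurveIn D f x₁ x₀ ∧
        eVariationOn f (Icc 0 1) ≤ ENNReal.ofReal (a * dist x₁ x₀) ∧
        ∀ t ∈ Icc (0 : ℝ) 1,
          eVariationOn f (Icc 0 t) ≤ ENNReal.ofReal (a * bdist D (f t))) →
      IsLengthJohn D a x₀) ∧
    ∃ a' : ℝ, 0 < a' ∧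
      ∀ (X : Type) [MetricSpace X], ∀ D : Set X, IsOpen D → Dᶜ.Nonempty →
        RectifiablyConnected D → LocQuasiconvex D lam c → ∀ x₀ ∈ D,
        IsLengthJohn D a x₀ →
        ∀ x₁ ∈ D, ∃ f : ℝ → X, IsCurveIn D f x₁ x₀ ∧
          eVariationOn f (Icc 0 1) ≤ ENNReal.ofReal (a' * dist x₁ x₀) ∧
          ∀ t ∈ Icc (0 : ℝ) 1,
            eVariationOn f (Icc 0 t) ≤ ENNReal.ofReal (a' * bdist D (f t)) := by
  have hc1 : (0:ℝ) < c + 1 := by linarith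
  constructor
  · intro X _ D _ _ _ _ x₀ _ H x hx
    obtain ⟨f, hf, -, h3⟩ := H x hx
    exact ⟨f, hf, h3⟩
  · refine ⟨2 * a * (c + 1) / lam + a + c, by positivity, ?_⟩
    intro X _ D hD hDc _ hQC x₀ hx₀ hJohn x₁ hx₁
    set ε := lam / (2 * (c + 1)) with hεdef
    have hε0 : 0 < ε := by positivity
    set a' := 2 * a * (c + 1) / lam + a + c with ha'def
    have hXpos : (0:ℝ) < 2 * a * (c + 1) / lam := by positivity
    have ha'a : a ≤ a' := by simp only [ha'def]; linarith
    have ha'c : c ≤ a' := by simp only [ha'def]; linarith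
    have ha'0 : 0 < a' := by linarith
    have hd0 : 0 < bdist D x₀ :=
      (hD.isClosed_compl.notMem_iff_infDist_pos hDc).1 (by simp [hx₀])
    have hdist0 : (0:ℝ) ≤ dist x₁ x₀ := dist_nonneg
    by_cases hcase : dist x₁ x₀ < ε * bdist D x₀
    · -- small case: use local quasiconvexity
      have hεlam : ε ≤ lam := by
        rw [hεdef, div_le_iff₀ (by positivity)]
        nlinarith
      have hlt : dist x₁ x₀ < lam * bdist D x₀ := by
        calc dist x₁ x₀ < ε * bdist D x₀ := hcase
          _ ≤ lam * bdist D x₀ := by nlinarith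
      obtain ⟨f, hf, hlen⟩ := hQC x₀ hx₀ x₁ hx₁ x₀ hx₀ hlt (by simpa using (by positivity : (0:ℝ) < lam * bdist D x₀))
      have hcε : c * ε ≤ lam / 2 := by
        rw [hεdef]
        rw [mul_div_assoc', div_le_div_iff₀ (by positivity) (by norm_num)]
        nlinarith
      -- distance bound for points on the curve
      have hnear : ∀ t ∈ Icc (0:ℝ) 1, dist (f t) x₀ ≤ c * dist x₁ x₀ := by
        intro t ht
        have h1 : edist (f t) (f 1) ≤ eVariationOn f (Icc 0 1) :=
          eVariationOn.edist_le f ht ⟨zero_le_one, le_refl 1⟩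
        have h2 : edist (f t) (f 1) ≤ ENNReal.ofReal (c * dist x₁ x₀) := h1.trans hlen
        have h3 : dist (f t) (f 1) ≤ c * dist x₁ x₀ :=
          (edist_le_ofReal (by positivity)).1 h2
        rwa [hf.target] at h3
      have hbd : ∀ t ∈ Icc (0:ℝ) 1, bdist D x₀ / 2 ≤ bdist D (f t) := by
        intro t ht
        have h1 : bdist D x₀ ≤ bdist D (f t) + dist x₀ (f t) :=
          Metric.infDist_le_infDist_add_dist
        have h2 : dist (f t) x₀ ≤ c * dist x₁ x₀ := hnear t ht
        have h3 : c * dist x₁ x₀ ≤ c * (ε * bdist D x₀) := by nlinarith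
        have h4 : c * (ε * bdist D x₀) ≤ (lam / 2) * bdist D x₀ := by nlinarith
        have h5 : (lam / 2) * bdist D x₀ ≤ bdist D x₀ / 2 := by nlinarith
        rw [dist_comm] at h1
        linarith
      refine ⟨f, hf, ?_, ?_⟩
      · exact hlen.trans (ENNReal.ofReal_le_ofReal (by nlinarith))
      · intro t ht
        have h1 : eVariationOn f (Icc 0 t) ≤ eVariationOn f (Icc 0 1) :=
          eVariationOn.mono f (Icc_subset_Icc le_rfl ht.2)
        refine (h1.trans hlen).trans (ENNReal.ofReal_le_ofReal ?_)
        have h2 := hbd t ht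
        have h3 : c * dist x₁ x₀ ≤ c * (ε * bdist D x₀) := by nlinarith
        have h4 : c * (ε * bdist D x₀) ≤ (lam / 2) * bdist D x₀ := by nlinarith
        calc c * dist x₁ x₀ ≤ (lam / 2) * bdist D x₀ := by linarith
          _ ≤ bdist D x₀ / 2 := by nlinarith
          _ ≤ bdist D (f t) := h2
          _ ≤ a' * bdist D (f t) :=
            le_mul_of_one_le_left (Metric.infDist_nonneg) (by linarith)
    · -- large case: use the John curve
      push_neg at hcase
      obtain ⟨f, hf, hcar⟩ := hJohn x₁ hx₁
      have hkey : a ≤ a' * ε := by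
        have h1 : (2 * a * (c + 1) / lam) * ε = a := by
          rw [hεdef]; field_simp
        have h2 : a' * ε = (2 * a * (c + 1) / lam) * ε + (a + c) * ε := by
          rw [ha'def]; ring
        have h3 : 0 ≤ (a + c) * ε := mul_nonneg (by linarith) hε0.le
        rw [h2, h1]
        linarith
      refine ⟨f, hf, ?_, ?_⟩
      · have h1 := hcar 1 ⟨zero_le_one, le_refl 1⟩
        rw [hf.target] at h1
        refine h1.trans (ENNReal.ofReal_le_ofReal ?_)
        calc a * bdist D x₀ ≤ (a' * ε) * bdist D x₀ :=
              mul_le_mul_of_nonneg_right hkey hd0.le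
          _ = a' * (ε * bdist D x₀) := by ring
          _ ≤ a' * dist x₁ x₀ := mul_le_mul_of_nonneg_left hcase ha'0.le
      · intro t ht
        refine (hcar t ht).trans (ENNReal.ofReal_le_ofReal ?_)
        exact mul_le_mul_of_nonneg_right ha'a Metric.infDist_nonneg
end

section
/- Let (D,d) be a noncomplete rectifiably connected metric space and x₀ ∈ D. Suppose every x₁ ∈ D can be joined to x₀ by a diameter a-carrot curve α satisfying the φ-natural condition diam_k(α[x₁,y]) ≤ φ(diam(α[x₁,y]) / dist(α[x₁,y], ∂D)) for all y ∈ α, where φ is increasing. If d(x₁) ≥ d(x₀)/2, then k(x₁, x₀) ≤ φ(2a(1+a)). -/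
open Set Metric ENNReal

/-- If every `x₁ ∈ D` joins `x₀` by a diameter `a`-carrot curve satisfying
the `φ`-natural condition with `φ` increasing, then `k(x₁, x₀) ≤ φ(2a(1+a))` whenever
`d(x₁) ≥ d(x₀)/2`. -/
theorem qhDist_le_of_natural_diameter_carrot
    {X : Type*} [MetricSpace X] (D : Set X) (hDo : IsOpen D) (hbd : Dᶜ.Nonempty)
    (hrc : RectifiablyConnected D) (a : ℝ) (ha : 1 ≤ a) (φ : ℝ → ℝ)
    (hφ : MonotoneOn φ (Ici 0)) (hφ0 : ∀ t, 0 ≤ t → 0 ≤ φ t)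
    (x₀ : X) (hx₀ : x₀ ∈ D)
    (hyp : ∀ x₁ ∈ D, ∃ f : ℝ → X, IsCurveIn D f x₁ x₀ ∧
      (∀ t ∈ Icc (0 : ℝ) 1,
        EMetric.diam (f '' Icc 0 t) ≤ ENNReal.ofReal (a * bdist D (f t))) ∧
      ∀ t ∈ Icc (0 : ℝ) 1,
        qhDiam D (f '' Icc 0 t) ≤ ENNReal.ofReal
          (φ ((EMetric.diam (f '' Icc 0 t)).toReal / setBdist D (f '' Icc 0 t)))) :
    ∀ x₁ ∈ D, bdist D x₀ / 2 ≤ bdist D x₁ →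
      qhDist D x₁ x₀ ≤ ENNReal.ofReal (φ (2 * a * (1 + a))) := by
  intro x₁ hx₁ hd
  obtain ⟨f, hf, hcarrot, hnat⟩ := hyp x₁ hx₁
  have hDc : IsClosed Dᶜ := hDo.isClosed_compl
  have ha0 : (0:ℝ) < a := lt_of_lt_of_le one_pos ha
  have h1a : (0:ℝ) < 1 + a := by linarith
  have hd0 : 0 < bdist D x₀ :=
    (hDc.notMem_iff_infDist_pos hbd).mp (by simpa using hx₀)
  have hd1 : 0 < bdist D x₁ :=
    (hDc.notMem_iff_infDist_pos hbd).mp (by simpa using hx₁)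
  set A := f '' Icc (0:ℝ) 1 with hA
  have h0A : x₁ ∈ A := ⟨0, by norm_num, hf.source⟩
  have h1A : x₀ ∈ A := ⟨1, by norm_num, hf.target⟩
  -- lower bound on the boundary distance along the curve
  have hlow : ∀ z ∈ A, bdist D x₁ / (1 + a) ≤ bdist D z := by
    rintro z ⟨t, ht, rfl⟩
    by_cases hcase : dist x₁ (f t) ≤ a / (1 + a) * bdist D x₁
    · have hlip : bdist D x₁ ≤ bdist D (f t) + dist x₁ (f t) :=
        Metric.infDist_le_infDist_add_dist
      rw [div_le_iff₀ h1a]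
      rw [div_mul_eq_mul_div, le_div_iff₀ h1a] at hcase
      nlinarith
    · push_neg at hcase
      have hed : edist x₁ (f t) ≤ EMetric.diam (f '' Icc 0 t) :=
        EMetric.edist_le_diam_of_mem ⟨0, ⟨le_refl 0, ht.1⟩, hf.source⟩
          ⟨t, ⟨ht.1, le_refl t⟩, rfl⟩
      have hbnn : 0 ≤ bdist D (f t) := Metric.infDist_nonneg
      have hdd : dist x₁ (f t) ≤ a * bdist D (f t) := by
        have := hed.trans (hcarrot t ht)
        rw [edist_dist, ENNReal.ofReal_le_ofReal_iff (by positivity)] at this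
        exact this
      rw [div_le_iff₀ h1a]
      rw [div_mul_eq_mul_div, div_lt_iff₀ h1a] at hcase
      nlinarith
  have hAne : A.Nonempty := ⟨x₁, h0A⟩
  have hsetB : bdist D x₁ / (1 + a) ≤ setBdist D A :=
    le_csInf (hAne.image _) (by rintro b ⟨z, hz, rfl⟩; exact hlow z hz)
  have hpos : 0 < setBdist D A := lt_of_lt_of_le (by positivity) hsetB
  -- diameter bound
  have hdiam : (EMetric.diam A).toReal ≤ a * bdist D x₀ := by
    have h := hcarrot 1 (by norm_num)
    rw [hf.target] at h
    exact ENNReal.toReal_le_of_le_ofReal (by positivity) h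
  -- ratio bound
  have hratio : (EMetric.diam A).toReal / setBdist D A ≤ 2 * a * (1 + a) := by
    have h1 : (EMetric.diam A).toReal / setBdist D A
        ≤ (a * bdist D x₀) / (bdist D x₁ / (1 + a)) :=
      div_le_div₀ (by positivity) hdiam (by positivity) hsetB
    refine h1.trans ?_
    rw [div_div_eq_mul_div, div_le_iff₀ hd1]
    nlinarith [mul_nonneg (mul_nonneg (by linarith : (0:ℝ) ≤ 2 * bdist D x₁ - bdist D x₀) ha0.le) h1a.le]
  -- quasihyperbolic distance ≤ quasihyperbolic diameter
  have hq : qhDist D x₁ x₀ ≤ qhDiam D A := by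
    have h1 : qhDist D x₁ x₀ ≤ ⨆ y ∈ A, qhDist D x₁ y := le_biSup _ h1A
    exact h1.trans (le_biSup (fun x => ⨆ y ∈ A, qhDist D x y) h0A)
  have hratio0 : 0 ≤ (EMetric.diam A).toReal / setBdist D A :=
    div_nonneg ENNReal.toReal_nonneg hpos.le
  calc qhDist D x₁ x₀ ≤ qhDiam D A := hq
    _ ≤ ENNReal.ofReal (φ ((EMetric.diam A).toReal / setBdist D A)) :=
        hnat 1 (by norm_num)
    _ ≤ ENNReal.ofReal (φ (2 * a * (1 + a))) :=
        ENNReal.ofReal_le_ofReal (hφ hratio0 (mem_Ici.mpr (by positivity)) hratio)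
end

section
/- Let D ⊊ ℝⁿ be a length a-John domain with center x₀. Then for every x ∈ D there is an arc β joining x to x₀ such that ℓ(β) ≤ c|x − x₀| and β is a c-carrot arc (ℓ(β[x,z]) ≤ c·dist(z, ∂D) for all z ∈ β), where c depends only on a (not on n). -/
open Set Metric ENNReal

/-!
Take `C = 2a`. If `x` is far from `x₀` compared with the boundary, `2|x - x₀| ≥ dist(x₀, ∂D)`,
the John arc already works: its length is at most `a·dist(x₀, ∂D) ≤ 2a|x - x₀|`. Otherwise the
segment `[x, x₀]` stays at distance at least `dist(x₀, ∂D) - |x - x₀| ≥ |x - x₀|` from `∂D`, so it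
lies in `D` and is a `1`-carrot arc of length `|x - x₀|`.
-/

open AffineMap
open scoped NNReal

variable {X : Type*} [MetricSpace X]

def IsCarrotCurve (D : Set X) (c : ℝ) (f : ℝ → X) : Prop :=
  ∀ t ∈ Icc (0 : ℝ) 1, eVariationOn f (Icc 0 t) ≤ ENNReal.ofReal (c * bdist D (f t))

theorem bdist_nonneg (D : Set X) (z : X) : 0 ≤ bdist D z := infDist_nonneg

theorem mem_of_bdist_pos {D : Set X} {z : X} (h : 0 < bdist D z) : z ∈ D := by
  by_contra hz
  exact h.ne' (infDist_zero_of_mem hz)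

theorem IsCarrotCurve.mono {D : Set X} {f : ℝ → X} {c c' : ℝ} (hf : IsCarrotCurve D c f)
    (hc : c ≤ c') : IsCarrotCurve D c' f := fun t ht =>
  (hf t ht).trans <| ENNReal.ofReal_le_ofReal <|
    mul_le_mul_of_nonneg_right hc (bdist_nonneg D (f t))

theorem LipschitzWith.eVariationOn_Icc_le {K : ℝ≥0} {f : ℝ → X} (hf : LipschitzWith K f)
    (u v : ℝ) : eVariationOn f (Icc u v) ≤ ENNReal.ofReal (K * (v - u)) := by
  have hid : eVariationOn id (univ ∩ Icc u v) = ENNReal.ofReal (v - u) :=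
    monotone_id.monotoneOn univ |>.eVariationOn_eq (mem_univ u) (mem_univ v)
  rw [univ_inter] at hid
  calc eVariationOn f (Icc u v) ≤ K * eVariationOn id (Icc u v) :=
        (hf.lipschitzOnWith (s := univ)).comp_eVariationOn_le (mapsTo_univ _ _)
    _ = ENNReal.ofReal (K * (v - u)) := by
        rw [hid, ENNReal.ofReal_mul K.coe_nonneg, ENNReal.ofReal_coe_nnreal]

section Segment

variable {E : Type*} [NormedAddCommGroup E] [NormedSpace ℝ E] {D : Set E} {x y : E}

theorem eVariationOn_lineMap_Icc_le (x y : E) (t : ℝ) :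
    eVariationOn (lineMap x y : ℝ → E) (Icc 0 t) ≤ ENNReal.ofReal (t * dist x y) := by
  have hlip : LipschitzWith (nndist x y) (lineMap x y : ℝ → E) := lipschitzWith_lineMap x y
  simpa [mul_comm] using hlip.eVariationOn_Icc_le 0 t

theorem bdist_sub_dist_le_bdist_lineMap {t : ℝ} (ht : t ∈ Icc (0 : ℝ) 1) :
    bdist D y - dist x y ≤ bdist D (lineMap x y t) := by
  have hdist : dist (lineMap x y t) y ≤ dist x y := by
    rw [dist_lineMap_right, Real.norm_eq_abs, abs_of_nonneg (by linarith [ht.2])]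
    exact mul_le_of_le_one_left dist_nonneg (by linarith [ht.1])
  have htri : bdist D y ≤ bdist D (lineMap x y t) + dist y (lineMap x y t) :=
    infDist_le_infDist_add_dist
  rw [dist_comm] at htri
  linarith

theorem isCurveIn_lineMap (h : dist x y < bdist D y) : IsCurveIn D (lineMap x y) x y where
  cont := (lineMap_continuous (R := ℝ)).continuousOn
  mem _ ht := mem_of_bdist_pos <| (sub_pos.2 h).trans_le (bdist_sub_dist_le_bdist_lineMap ht)
  source := lineMap_apply_zero x y
  target := lineMap_apply_one x y

theorem isCarrotCurve_lineMap (h : 2 * dist x y ≤ bdist D y) :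
    IsCarrotCurve D 1 (lineMap x y) := fun t ht => by
  refine (eVariationOn_lineMap_Icc_le x y t).trans (ENNReal.ofReal_le_ofReal ?_)
  have := bdist_sub_dist_le_bdist_lineMap (D := D) (x := x) (y := y) ht
  nlinarith [ht.2, dist_nonneg (x := x) (y := y)]

theorem IsLengthJohn.exists_carrotCurve_length_le {a : ℝ} (hJ : IsLengthJohn D a y)
    (ha : 1 ≤ 2 * a) (hx : x ∈ D) :
    ∃ f : ℝ → E, IsCurveIn D f x y ∧
      eVariationOn f (Icc 0 1) ≤ ENNReal.ofReal (2 * a * dist x y) ∧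
      IsCarrotCurve D (2 * a) f := by
  by_cases hnear : 2 * dist x y < bdist D y
  · refine ⟨lineMap x y, isCurveIn_lineMap (by linarith [dist_nonneg (x := x) (y := y)]), ?_,
      (isCarrotCurve_lineMap hnear.le).mono ha⟩
    refine (eVariationOn_lineMap_Icc_le x y 1).trans (ENNReal.ofReal_le_ofReal ?_)
    nlinarith [dist_nonneg (x := x) (y := y)]
  · obtain ⟨f, hf, hcarrot⟩ : ∃ f, IsCurveIn D f x y ∧ IsCarrotCurve D a f := hJ x hx
    refine ⟨f, hf, ?_, hcarrot.mono (c' := 2 * a) (by linarith)⟩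
    refine (hcarrot 1 (right_mem_Icc.2 zero_le_one)).trans (ENNReal.ofReal_le_ofReal ?_)
    rw [hf.target]
    nlinarith

end Segment

/-- Corollary: In a length `a`-John domain `D ⊊ ℝⁿ` with center `x₀`,
every `x ∈ D` joins `x₀` by an arc `β` with `ℓ(β) ≤ C|x − x₀|` which is a `C`-carrot
arc, `C` depending only on `a` (not on `n`). -/
theorem euclidean_john_quasiconvex_carrot (a : ℝ) (ha : 1 ≤ a) :
    ∃ C : ℝ, 1 ≤ C ∧
      ∀ (n : ℕ) (D : Set (EuclideanSpace ℝ (Fin n))), IsOpen D → IsConnected D →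
        D ≠ Set.univ → ∀ x₀ ∈ D, IsLengthJohn D a x₀ →
        ∀ x ∈ D, ∃ f : ℝ → EuclideanSpace ℝ (Fin n), IsCurveIn D f x x₀ ∧
          eVariationOn f (Icc 0 1) ≤ ENNReal.ofReal (C * dist x x₀) ∧
          ∀ t ∈ Icc (0 : ℝ) 1,
            eVariationOn f (Icc 0 t) ≤ ENNReal.ofReal (C * bdist D (f t)) := by
  refine ⟨2 * a, by linarith, fun _ _ _ _ _ _ _ hJ _ hx => ?_⟩
  exact hJ.exists_carrotCurve_length_le (by linarith) hx
end

section
/- Let (D,d) be a noncomplete rectifiably connected metric space and let x₁, x₂, ..., x_{n} be points with d(x_{i+1}) = 2d(x_i) for i = 1,...,n−1, joined consecutively by curves β_i from x_i to x_{i+1} with quasihyperbolic length ℓ_k(β_i) ≤ b. Then for i ≤ n−1, ℓ(β_i) ≤ 2b·d(x_i), and for any point x on β_j, d(x_j) ≤ e^b·d(x) and the concatenation β satisfies ℓ(β[x₁, x]) ≤ 4e^{2b}·d(x). -/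
open Set Metric ENNReal

section Aux

open Real

lemma bdist_pos_of_mem {X : Type*} [MetricSpace X] {D : Set X} (hDo : IsOpen D)
    (hbd : Dᶜ.Nonempty) {z : X} (hz : z ∈ D) : 0 < bdist D z :=
  (hDo.isClosed_compl.notMem_iff_infDist_pos hbd).1 (by simpa using hz)

lemma bdist_lipschitz {X : Type*} [MetricSpace X] (D : Set X) (u v : X) :
    |bdist D u - bdist D v| ≤ dist u v := by
  rw [abs_sub_le_iff]
  constructor
  · have := Metric.infDist_le_infDist_add_dist (x := u) (y := v) (s := Dᶜ)
    simp only [bdist]; linarith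
  · have := Metric.infDist_le_infDist_add_dist (x := v) (y := u) (s := Dᶜ)
    simp only [bdist]; rw [dist_comm]; linarith

/-- core real-arithmetic inequality, ordered version -/
lemma log_jump_aux {A C m0 dAB ε : ℝ} (hAC : A ≤ C) (hm0A : m0 ≤ A) (hm0 : 0 < m0)
    (hε : 0 < ε) (hdiff : C - A ≤ ε * m0) (hdist : C - A ≤ dAB) :
    Real.log C - Real.log A ≤ (1 + ε) * (dAB / C) := by
  have hA : 0 < A := lt_of_lt_of_le hm0 hm0A
  have hC : 0 < C := lt_of_lt_of_le hA hAC
  have h1 : Real.log C - Real.log A = Real.log (C / A) :=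
    (Real.log_div hC.ne' hA.ne').symm
  have h2 : Real.log (C / A) ≤ C / A - 1 := Real.log_le_sub_one_of_pos (div_pos hC hA)
  have h3 : C / A - 1 = (C - A) / A := by field_simp
  have h4 : C ≤ (1 + ε) * A := by nlinarith
  have h5 : (C - A) / A ≤ (1 + ε) * (dAB / C) := by
    rw [mul_div_assoc'] at *
    rw [div_le_div_iff₀ hA hC]
    nlinarith
  linarith

lemma log_jump {X : Type*} [MetricSpace X] (D : Set X) {u v : X} {m0 ε : ℝ}
    (hm0u : m0 ≤ bdist D u) (hm0v : m0 ≤ bdist D v) (hm0 : 0 < m0) (hε : 0 < ε)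
    (hdiff : |bdist D u - bdist D v| ≤ ε * m0) :
    |Real.log (bdist D v) - Real.log (bdist D u)| ≤
      (1 + ε) * (dist u v / max (bdist D u) (bdist D v)) := by
  have hlip := bdist_lipschitz D u v
  have h1 := abs_le.1 hdiff
  have h2 := abs_le.1 hlip
  rcases le_total (bdist D u) (bdist D v) with h | h
  · have hlog := Real.log_le_log (lt_of_lt_of_le hm0 hm0u) h
    rw [max_eq_right h, abs_of_nonneg (by linarith)]
    exact log_jump_aux h hm0u hm0 hε (by linarith) (by linarith)
  · have hlog := Real.log_le_log (lt_of_lt_of_le hm0 hm0v) h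
    rw [max_eq_left h, abs_of_nonpos (by linarith), neg_sub, dist_comm]
    rw [dist_comm u v] at h2
    exact log_jump_aux h hm0v hm0 hε (by linarith) (by linarith)

end Aux

lemma evar_le_of_qh {X : Type*} [MetricSpace X] {D : Set X} (hDo : IsOpen D)
    (hbd : Dᶜ.Nonempty) {g : ℝ → X} (hmem : ∀ t ∈ Icc (0:ℝ) 1, g t ∈ D)
    {C b : ℝ} (hb : 0 ≤ b) (hball : ∀ t ∈ Icc (0:ℝ) 1, bdist D (g t) ≤ C)
    (hq : qhVariationOn D g (Icc 0 1) ≤ ENNReal.ofReal b) :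
    eVariationOn g (Icc 0 1) ≤ ENNReal.ofReal (b * C) := by
  rw [eVariationOn]
  apply iSup_le
  rintro ⟨m, u, hu, hus⟩
  have key : ∀ i : ℕ,
      edist (g (u (i + 1))) (g (u i)) ≤
        edist (g (u (i + 1))) (g (u i)) /
          max (ENNReal.ofReal (bdist D (g (u i)))) (ENNReal.ofReal (bdist D (g (u (i+1))))) *
          ENNReal.ofReal C := by
    intro i
    set M := max (ENNReal.ofReal (bdist D (g (u i)))) (ENNReal.ofReal (bdist D (g (u (i+1)))))
      with hM
    have hM0 : M ≠ 0 := by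
      have : (0:ℝ≥0∞) < ENNReal.ofReal (bdist D (g (u i))) := by
        rw [ENNReal.ofReal_pos]
        exact bdist_pos_of_mem hDo hbd (hmem _ (hus i))
      exact (lt_of_lt_of_le this (le_max_left _ _)).ne'
    have hMtop : M ≠ ⊤ :=
      (max_lt ENNReal.ofReal_lt_top ENNReal.ofReal_lt_top).ne
    have hMC : M ≤ ENNReal.ofReal C :=
      max_le (ENNReal.ofReal_le_ofReal (hball _ (hus i)))
        (ENNReal.ofReal_le_ofReal (hball _ (hus (i+1))))
    calc edist (g (u (i + 1))) (g (u i))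
        = edist (g (u (i + 1))) (g (u i)) / M * M :=
          (ENNReal.div_mul_cancel hM0 hMtop).symm
      _ ≤ _ := mul_le_mul_right hMC _
  calc ∑ i ∈ Finset.range m, edist (g (u (i + 1))) (g (u i))
      ≤ ∑ i ∈ Finset.range m, edist (g (u (i + 1))) (g (u i)) /
          max (ENNReal.ofReal (bdist D (g (u i)))) (ENNReal.ofReal (bdist D (g (u (i+1))))) *
          ENNReal.ofReal C := Finset.sum_le_sum fun i _ => key i
    _ = (∑ i ∈ Finset.range m, edist (g (u (i + 1))) (g (u i)) /
          max (ENNReal.ofReal (bdist D (g (u i)))) (ENNReal.ofReal (bdist D (g (u (i+1)))))) *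
          ENNReal.ofReal C := (Finset.sum_mul _ _ _).symm
    _ ≤ ENNReal.ofReal b * ENNReal.ofReal C := by
        apply mul_le_mul_left
        refine le_trans ?_ hq
        rw [qhVariationOn]
        exact le_iSup (fun p : ℕ × { u : ℕ → ℝ // Monotone u ∧ ∀ i, u i ∈ Icc (0:ℝ) 1 } =>
          ∑ i ∈ Finset.range p.1,
            edist (g (p.2.1 (i + 1))) (g (p.2.1 i)) /
              max (ENNReal.ofReal (bdist D (g (p.2.1 i))))
                (ENNReal.ofReal (bdist D (g (p.2.1 (i + 1)))))) ⟨m, ⟨u, hu, hus⟩⟩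
    _ = ENNReal.ofReal (b * C) := (ENNReal.ofReal_mul hb).symm

lemma bdist_start_le_exp {X : Type*} [MetricSpace X] {D : Set X} (hDo : IsOpen D)
    (hbd : Dᶜ.Nonempty) {g : ℝ → X} (hcont : ContinuousOn g (Icc 0 1))
    (hmem : ∀ s ∈ Icc (0:ℝ) 1, g s ∈ D) {b : ℝ} (hb : 0 < b)
    (hq : qhVariationOn D g (Icc 0 1) ≤ ENNReal.ofReal b)
    {t : ℝ} (ht : t ∈ Icc (0:ℝ) 1) :
    bdist D (g 0) ≤ Real.exp b * bdist D (g t) := by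
  have h0mem : (0:ℝ) ∈ Icc (0:ℝ) 1 := ⟨le_refl 0, zero_le_one⟩
  have ha : 0 < bdist D (g 0) := bdist_pos_of_mem hDo hbd (hmem _ h0mem)
  have hc : 0 < bdist D (g t) := bdist_pos_of_mem hDo hbd (hmem _ ht)
  suffices hlog : Real.log (bdist D (g 0)) - Real.log (bdist D (g t)) ≤ b by
    have h := Real.exp_le_exp.2 hlog
    rw [Real.exp_sub, Real.exp_log ha, Real.exp_log hc] at h
    exact (div_le_iff₀ hc).1 h
  have claim : ∀ ε : ℝ, 0 < ε →
      Real.log (bdist D (g 0)) - Real.log (bdist D (g t)) ≤ (1 + ε) * b := by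
    intro ε hε
    have subIcc : Icc (0:ℝ) t ⊆ Icc 0 1 := Icc_subset_Icc le_rfl ht.2
    have hIccne : (Icc (0:ℝ) t).Nonempty := ⟨0, le_refl 0, ht.1⟩
    have φcont : ContinuousOn (fun s => bdist D (g s)) (Icc 0 t) :=
      ((Metric.continuous_infDist_pt Dᶜ).comp_continuousOn hcont).mono subIcc
    obtain ⟨s0, hs0, hmin⟩ := isCompact_Icc.exists_isMinOn hIccne φcont
    set m0 := bdist D (g s0) with hm0def
    have hm0 : 0 < m0 := bdist_pos_of_mem hDo hbd (hmem _ (subIcc hs0))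
    have uc := isCompact_Icc.uniformContinuousOn_of_continuous φcont
    rw [Metric.uniformContinuousOn_iff] at uc
    obtain ⟨δ, hδ, huc⟩ := uc (ε * m0) (by positivity)
    obtain ⟨N, hN⟩ := exists_nat_gt (t / δ)
    have hN0 : 0 < (N:ℝ) := (div_nonneg ht.1 hδ.le).trans_lt hN
    set u : ℕ → ℝ := fun k => t * (min k N : ℕ) / N with hudef
    have hut : ∀ k, u k ∈ Icc (0:ℝ) t := by
      intro k
      constructor
      · have : (0:ℝ) ≤ (min k N : ℕ) := Nat.cast_nonneg _
        simp only [hudef]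
        exact div_nonneg (mul_nonneg ht.1 this) hN0.le
      · simp only [hudef]
        rw [div_le_iff₀ hN0]
        have h1 : ((min k N : ℕ):ℝ) ≤ (N:ℝ) := Nat.cast_le.2 (min_le_right _ _)
        nlinarith [ht.1]
    have humono : Monotone u := by
      intro k l hkl
      simp only [hudef]
      have h1 : ((min k N : ℕ):ℝ) ≤ ((min l N : ℕ):ℝ) :=
        Nat.cast_le.2 (min_le_min hkl le_rfl)
      gcongr
      exact ht.1
    have hus : ∀ k, u k ∈ Icc (0:ℝ) 1 := fun k => subIcc (hut k)
    have htN : t / N < δ := by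
      rw [div_lt_iff₀ hN0]
      rw [div_lt_iff₀ hδ] at hN
      linarith
    have hgap : ∀ k : ℕ, dist (u (k+1)) (u k) < δ := by
      intro k
      have hmk : ((min (k+1) N : ℕ):ℝ) ≤ ((min k N : ℕ):ℝ) + 1 := by
        exact_mod_cast (by omega : min (k+1) N ≤ min k N + 1)
      have hnn : u k ≤ u (k+1) := humono (Nat.le_succ k)
      rw [Real.dist_eq, abs_of_nonneg (by linarith)]
      have hdiff : u (k+1) - u k ≤ t / N := by
        simp only [hudef]
        rw [div_sub_div_same, div_le_div_iff₀ hN0 hN0]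
        nlinarith [mul_le_mul_of_nonneg_left hmk ht.1, hN0]
      linarith
    have hminu : ∀ k, m0 ≤ bdist D (g (u k)) := fun k => isMinOn_iff.1 hmin _ (hut k)
    have hjump : ∀ k : ℕ, |bdist D (g (u k)) - bdist D (g (u (k+1)))| ≤ ε * m0 := by
      intro k
      have := huc (u k) (hut k) (u (k+1)) (hut (k+1))
        (by rw [dist_comm]; exact hgap k)
      rw [Real.dist_eq] at this
      exact this.le
    -- real partition sum bound
    set T : ℕ → ℝ := fun k => dist (g (u (k+1))) (g (u k)) /
      max (bdist D (g (u k))) (bdist D (g (u (k+1)))) with hTdef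
    have hTnn : ∀ k, 0 ≤ T k := fun k => div_nonneg dist_nonneg
      (le_trans (hm0.le.trans (hminu k)) (le_max_left _ _))
    have hmaxpos : ∀ k : ℕ, 0 < max (bdist D (g (u k))) (bdist D (g (u (k+1)))) :=
      fun k => lt_of_lt_of_le (hm0.trans_le (hminu k)) (le_max_left _ _)
    have hofmax : Monotone ENNReal.ofReal := fun _ _ h => ENNReal.ofReal_le_ofReal h
    have hP : ENNReal.ofReal (∑ k ∈ Finset.range N, T k) ≤ ENNReal.ofReal b := by
      rw [ENNReal.ofReal_sum_of_nonneg (fun k _ => hTnn k)]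
      have heq : ∀ k : ℕ, ENNReal.ofReal (T k) =
          edist (g (u (k+1))) (g (u k)) /
            max (ENNReal.ofReal (bdist D (g (u k)))) (ENNReal.ofReal (bdist D (g (u (k+1))))) := by
        intro k
        rw [hTdef, edist_dist, ← hofmax.map_max, ← ENNReal.ofReal_div_of_pos (hmaxpos k)]
      calc ∑ k ∈ Finset.range N, ENNReal.ofReal (T k)
          = ∑ k ∈ Finset.range N, edist (g (u (k+1))) (g (u k)) /
              max (ENNReal.ofReal (bdist D (g (u k))))
                (ENNReal.ofReal (bdist D (g (u (k+1))))) :=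
            Finset.sum_congr rfl fun k _ => heq k
        _ ≤ qhVariationOn D g (Icc 0 1) := by
            rw [qhVariationOn]
            exact le_iSup (fun p : ℕ × { v : ℕ → ℝ // Monotone v ∧ ∀ i, v i ∈ Icc (0:ℝ) 1 } =>
              ∑ i ∈ Finset.range p.1,
                edist (g (p.2.1 (i + 1))) (g (p.2.1 i)) /
                  max (ENNReal.ofReal (bdist D (g (p.2.1 i))))
                    (ENNReal.ofReal (bdist D (g (p.2.1 (i + 1)))))) ⟨N, ⟨u, humono, hus⟩⟩
        _ ≤ ENNReal.ofReal b := hq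
    have hT : ∑ k ∈ Finset.range N, T k ≤ b :=
      (ENNReal.ofReal_le_ofReal_iff hb.le).1 hP
    -- telescoping
    have htel := dist_le_range_sum_dist (fun k => Real.log (bdist D (g (u k)))) N
    have hu0 : u 0 = 0 := by simp [hudef]
    have huN : u N = t := by
      simp only [hudef, min_self]
      field_simp
    rw [hu0, huN] at htel
    have hper : ∀ k : ℕ, dist (Real.log (bdist D (g (u k)))) (Real.log (bdist D (g (u (k+1)))))
        ≤ (1 + ε) * T k := by
      intro k
      rw [Real.dist_eq, abs_sub_comm]
      have := log_jump D (u := g (u k)) (v := g (u (k+1))) (hminu k) (hminu (k+1)) hm0 hε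
        (hjump k)
      rw [dist_comm] at this
      exact this
    calc Real.log (bdist D (g 0)) - Real.log (bdist D (g t))
        ≤ dist (Real.log (bdist D (g 0))) (Real.log (bdist D (g t))) := by
          rw [Real.dist_eq]; exact le_abs_self _
      _ ≤ ∑ k ∈ Finset.range N,
            dist (Real.log (bdist D (g (u k)))) (Real.log (bdist D (g (u (k+1))))) := htel
      _ ≤ ∑ k ∈ Finset.range N, (1 + ε) * T k := Finset.sum_le_sum fun k _ => hper k
      _ = (1 + ε) * ∑ k ∈ Finset.range N, T k := by rw [Finset.mul_sum]
      _ ≤ (1 + ε) * b := by nlinarith [hT]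
  apply _root_.le_of_forall_pos_le_add
  intro ε' hε'
  have h := claim (ε' / b) (div_pos hε' hb)
  have : (1 + ε' / b) * b = b + ε' := by field_simp
  linarith
/-- Given points `x 1, …, x n` with `d(x (i+1)) = 2 d(x i)`, joined by
curves `f i` of quasihyperbolic length at most `b` that stay in
`{z : d(z) ≤ 2 d(x i)}`, one has `ℓ(f i) ≤ 2b·d(x i)`; and for every point on `f j`,
`d(x j) ≤ e^b·d(x)` and the concatenated length up to that point is
at most `4 e^{2b}·d(x)`. -/
theorem chain_concatenation_length_bound
    {X : Type*} [MetricSpace X] (D : Set X) (hDo : IsOpen D) (hbd : Dᶜ.Nonempty)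
    (hrc : RectifiablyConnected D) (b : ℝ) (hb : 0 < b)
    (n : ℕ) (hn : 1 ≤ n) (x : ℕ → X) (f : ℕ → ℝ → X)
    (hxmem : ∀ i ∈ Finset.Icc 1 n, x i ∈ D)
    (hdouble : ∀ i ∈ Finset.Ico 1 n, bdist D (x (i + 1)) = 2 * bdist D (x i))
    (hcurve : ∀ i ∈ Finset.Ico 1 n, IsCurveIn D (f i) (x i) (x (i + 1)))
    (hqh : ∀ i ∈ Finset.Ico 1 n, qhVariationOn D (f i) (Icc 0 1) ≤ ENNReal.ofReal b)
    (hfirst : ∀ i ∈ Finset.Ico 1 n, ∀ t ∈ Icc (0 : ℝ) 1,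
      bdist D (f i t) ≤ 2 * bdist D (x i)) :
    (∀ i ∈ Finset.Ico 1 n,
        eVariationOn (f i) (Icc 0 1) ≤ ENNReal.ofReal (2 * b * bdist D (x i))) ∧
      ∀ j ∈ Finset.Ico 1 n, ∀ t ∈ Icc (0 : ℝ) 1,
        bdist D (x j) ≤ Real.exp b * bdist D (f j t) ∧
        (∑ i ∈ Finset.Ico 1 j, eVariationOn (f i) (Icc 0 1)) +
            eVariationOn (f j) (Icc 0 t) ≤
          ENNReal.ofReal (4 * Real.exp (2 * b) * bdist D (f j t)) := by
  have hbdnn : ∀ z : X, 0 ≤ bdist D z := fun z => Metric.infDist_nonneg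
  have hpart1 : ∀ i ∈ Finset.Ico 1 n,
      eVariationOn (f i) (Icc 0 1) ≤ ENNReal.ofReal (2 * b * bdist D (x i)) := by
    intro i hi
    have hcv := hcurve i hi
    have := evar_le_of_qh hDo hbd hcv.mem hb.le (hfirst i hi) (hqh i hi)
    convert this using 2
    ring
  refine ⟨hpart1, ?_⟩
  intro j hj t ht
  obtain ⟨hj1, hj2⟩ := Finset.mem_Ico.1 hj
  have hcv := hcurve j hj
  have hC : bdist D (x j) ≤ Real.exp b * bdist D (f j t) := by
    have := bdist_start_le_exp hDo hbd hcv.cont hcv.mem hb (hqh j hj) ht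
    rwa [hcv.source] at this
  refine ⟨hC, ?_⟩
  have hsum : ∀ m : ℕ, 1 ≤ m → m < n →
      ∑ i ∈ Finset.Icc 1 m, bdist D (x i) ≤ 2 * bdist D (x m) := by
    intro m
    induction m with
    | zero => intro h; exact absurd h (by norm_num)
    | succ m ih =>
      intro _ h2
      by_cases hm0 : m = 0
      · subst hm0
        simp only [Finset.Icc_self, Finset.sum_singleton]
        linarith [hbdnn (x 1)]
      · have hm1 : 1 ≤ m := Nat.one_le_iff_ne_zero.2 hm0
        have hmlt : m < n := Nat.lt_of_succ_lt h2
        have hd := hdouble m (Finset.mem_Ico.2 ⟨hm1, hmlt⟩)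
        have hih := ih hm1 hmlt
        rw [← Finset.Ico_add_one_right_eq_Icc, Finset.sum_Ico_succ_top (by omega : 1 ≤ m + 1),
          Finset.Ico_add_one_right_eq_Icc]
        linarith
  have hzpos : 0 < bdist D (f j t) := bdist_pos_of_mem hDo hbd (hcv.mem t ht)
  have hmono : eVariationOn (f j) (Icc 0 t) ≤ eVariationOn (f j) (Icc 0 1) :=
    eVariationOn.mono _ (Icc_subset_Icc le_rfl ht.2)
  have hnn : ∀ i : ℕ, 0 ≤ 2 * b * bdist D (x i) := fun i =>
    mul_nonneg (by linarith) (hbdnn _)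
  calc (∑ i ∈ Finset.Ico 1 j, eVariationOn (f i) (Icc 0 1)) + eVariationOn (f j) (Icc 0 t)
      ≤ (∑ i ∈ Finset.Ico 1 j, ENNReal.ofReal (2 * b * bdist D (x i))) +
          ENNReal.ofReal (2 * b * bdist D (x j)) := by
        refine add_le_add (Finset.sum_le_sum fun i hi => ?_) (hmono.trans (hpart1 j hj))
        obtain ⟨h1, h2⟩ := Finset.mem_Ico.1 hi
        exact hpart1 i (Finset.mem_Ico.2 ⟨h1, lt_trans h2 hj2⟩)
    _ = ENNReal.ofReal (∑ i ∈ Finset.Icc 1 j, 2 * b * bdist D (x i)) := by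
        rw [← ENNReal.ofReal_sum_of_nonneg (fun i _ => hnn i),
          ← ENNReal.ofReal_add (Finset.sum_nonneg fun i _ => hnn i) (hnn j),
          ← Finset.Ico_add_one_right_eq_Icc, Finset.sum_Ico_succ_top hj1]
    _ ≤ ENNReal.ofReal (4 * Real.exp (2 * b) * bdist D (f j t)) := by
        apply ENNReal.ofReal_le_ofReal
        rw [← Finset.mul_sum, two_mul b, Real.exp_add]
        have h1 := hsum j hj1 hj2
        have hS0 : 0 ≤ ∑ i ∈ Finset.Icc 1 j, bdist D (x i) :=
          Finset.sum_nonneg fun i _ => hbdnn _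
        nlinarith [mul_le_mul_of_nonneg_left h1 (by linarith : (0:ℝ) ≤ 2 * b),
          mul_le_mul_of_nonneg_left hC (by linarith : (0:ℝ) ≤ 4 * b),
          Real.add_one_le_exp b, Real.exp_pos b, hzpos,
          mul_nonneg (Real.exp_pos b).le hzpos.le,
          mul_pos (Real.exp_pos b) hzpos]
end
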